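/- arXiv:1309.6095 — 7 statements merged into one kernel-verified Lean document; each statement's English description precedes it below -/
import Mathlib

section
/- Let G be a locally compact second countable group with a left Reiter sequence (F_m), and let g ↦ u_g be a bounded measurable function from G to a Hilbert space H. Then limsup_m ‖∫ u_g dF_m(g)‖² ≤ inf over probability Radon measures P on G of limsup_m ∫∫∫ ⟨u_{hg}, u_{lg}⟩ dP(h) dP(l) dF_m(g). -/
open MeasureTheory Filter Topology
open scoped RealInnerProductSpace

/-- Total variation distance between two (finite) measures. -/
noncomputable def tvDist {G : Type*} [MeasurableSpace G] (μ ν : Measure G) : ENNReal :=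
  ⨆ (s : Set G) (_ : MeasurableSet s), (μ s - ν s) + (ν sᶜ - μ sᶜ)

/-- Left Reiter sequence: `‖h ∗ F_N - F_N‖ → 0` for every probability Radon measure `h`. -/
def IsLeftReiter {G : Type*} [Group G] [MeasurableSpace G] (F : ℕ → Measure G) : Prop :=
  (∀ N, IsProbabilityMeasure (F N)) ∧
    ∀ h : Measure G, IsProbabilityMeasure h →
      Tendsto (fun N => tvDist ((h.mconv (F N))) (F N)) atTop (𝓝 0)

/-!
Average the translates: with `v g = ∫ u (h * g) dP(h)`, the triple integral is `∫ ‖v‖² dF_m`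
by expanding the square, and `∫ v dF_m = ∫ u d(P ∗ F_m)`. Jensen gives
`‖∫ u d(P ∗ F_m)‖² ≤ ∫ ‖v‖² dF_m`, while the Reiter property makes `∫ u d(P ∗ F_m)` and
`∫ u dF_m` asymptotically equal, since a bounded function integrates to within
`sup ‖u‖ · ‖P ∗ F_m - F_m‖` against the two measures.
-/

lemma sq_norm_le_sq_norm_add_of_norm_le {E : Type*} [SeminormedAddCommGroup E] {x y : E}
    {C : ℝ} (hx : ‖x‖ ≤ C) (hy : ‖y‖ ≤ C) : ‖x‖ ^ 2 ≤ ‖y‖ ^ 2 + 2 * C * ‖x - y‖ := by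
  have : ‖x‖ ^ 2 - ‖y‖ ^ 2 ≤ 2 * C * ‖x - y‖ :=
    calc ‖x‖ ^ 2 - ‖y‖ ^ 2 = (‖x‖ - ‖y‖) * (‖x‖ + ‖y‖) := by ring
      _ ≤ ‖x - y‖ * (‖x‖ + ‖y‖) := by gcongr; exact norm_sub_norm_le x y
      _ ≤ ‖x - y‖ * (2 * C) := by gcongr; linarith
      _ = 2 * C * ‖x - y‖ := by ring
  linarith

lemma Filter.limsup_le_limsup_of_le_add {ι : Type*} {l : Filter ι} [l.NeBot] {a c d : ι → ℝ}
    (hle : ∀ᶠ i in l, a i ≤ c i + d i) (hd : Tendsto d l (𝓝 0))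
    (ha : l.IsCoboundedUnder (· ≤ ·) a) (hc : l.IsBoundedUnder (· ≤ ·) c)
    (hc' : l.IsCoboundedUnder (· ≤ ·) c) :
    limsup a l ≤ limsup c l := by
  refine le_of_forall_sub_le fun ε hε => sub_le_iff_le_add.2 ?_
  have hε_le : ∀ᶠ i in l, a i ≤ c i + ε := by
    filter_upwards [hle, hd.eventually_lt_const hε] with i hi hdi
    linarith
  calc limsup a l ≤ limsup (fun i => c i + ε) l :=
        limsup_le_limsup hε_le ha (isBoundedUnder_le_add hc isBoundedUnder_const)
    _ = limsup c l + ε := limsup_add_const l c ε hc hc'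

section Integrals

variable {α E : Type*} [MeasurableSpace α] [NormedAddCommGroup E] [NormedSpace ℝ E]
  {μ ν : Measure α} {f : α → E} {C : ℝ}

lemma norm_integral_le_of_forall_norm_le [IsProbabilityMeasure μ] (hfC : ∀ x, ‖f x‖ ≤ C) :
    ‖∫ x, f x ∂μ‖ ≤ C := by
  simpa using norm_integral_le_of_norm_le_const (μ := μ) (ae_of_all μ hfC)

lemma sq_norm_integral_le_integral_sq_norm [CompleteSpace E] [IsProbabilityMeasure μ]
    (hf : Integrable f μ) (hf2 : Integrable (fun x => ‖f x‖ ^ 2) μ) :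
    ‖∫ x, f x ∂μ‖ ^ 2 ≤ ∫ x, ‖f x‖ ^ 2 ∂μ :=
  (convexOn_univ_norm.pow (fun x _ => norm_nonneg x) 2).map_integral_le
    (continuous_norm.pow 2).continuousOn isClosed_univ (ae_of_all _ fun _ => Set.mem_univ _)
    hf hf2

lemma sq_norm_integral_eq_integral_integral_inner {H : Type*} [NormedAddCommGroup H]
    [InnerProductSpace ℝ H] [CompleteSpace H] {w : α → H} (hw : Integrable w μ) :
    ‖∫ x, w x ∂μ‖ ^ 2 = ∫ y, ∫ x, ⟪w x, w y⟫ ∂μ ∂μ := by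
  have hinner : ∀ y, ⟪∫ x, w x ∂μ, w y⟫ = ∫ x, ⟪w x, w y⟫ ∂μ := fun y => by
    rw [real_inner_comm, ← integral_inner hw]
    exact integral_congr_ae (ae_of_all _ fun x => real_inner_comm _ _)
  rw [← real_inner_self_eq_norm_sq, ← integral_inner hw]
  exact integral_congr_ae (ae_of_all _ hinner)

lemma tvDist_ne_top [IsFiniteMeasure μ] [IsFiniteMeasure ν] : tvDist μ ν ≠ ⊤ := by
  refine ne_top_of_le_ne_top (ENNReal.add_ne_top.2 ⟨measure_ne_top μ .univ,
    measure_ne_top ν .univ⟩) (iSup₂_le fun s _ => add_le_add ?_ ?_) <;>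
  exact tsub_le_self.trans (measure_mono (Set.subset_univ _))

lemma norm_integral_sub_integral_le_of_le [IsFiniteMeasure μ] (hνμ : ν ≤ μ)
    (hf : StronglyMeasurable f) (hfC : ∀ x, ‖f x‖ ≤ C) :
    ‖∫ x, f x ∂μ - ∫ x, f x ∂ν‖ ≤ C * (μ .univ - ν .univ).toReal := by
  have : IsFiniteMeasure ν := isFiniteMeasure_of_le μ hνμ
  have : IsFiniteMeasure (μ - ν) := isFiniteMeasure_of_le μ Measure.sub_le
  have hsplit : ∫ x, f x ∂μ = ∫ x, f x ∂(μ - ν) + ∫ x, f x ∂ν := by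
    conv_lhs => rw [← Measure.sub_add_cancel_of_le hνμ]
    exact integral_add_measure (.of_bound hf.aestronglyMeasurable C (ae_of_all _ hfC))
      (.of_bound hf.aestronglyMeasurable C (ae_of_all _ hfC))
  rw [hsplit, add_sub_cancel_right, ← Measure.sub_apply .univ hνμ]
  exact norm_integral_le_of_norm_le_const (ae_of_all _ hfC)

lemma norm_integral_sub_integral_le_mul_tvDist [IsFiniteMeasure μ] [IsFiniteMeasure ν]
    (hf : StronglyMeasurable f) (hC : 0 ≤ C) (hfC : ∀ x, ‖f x‖ ≤ C) :
    ‖∫ x, f x ∂μ - ∫ x, f x ∂ν‖ ≤ C * (tvDist μ ν).toReal := by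
  obtain ⟨s, hs, hνμ, hμν⟩ := hahn_decomposition μ ν
  have restrict_le {ρ σ : Measure α} {t : Set α} (ht : MeasurableSet t)
      (h : ∀ r, MeasurableSet r → r ⊆ t → ρ r ≤ σ r) : ρ.restrict t ≤ σ.restrict t :=
    Measure.le_iff.2 fun r hr => by
      simpa only [Measure.restrict_apply hr] using h _ (hr.inter ht) Set.inter_subset_right
  have hint : ∀ ρ : Measure α, [IsFiniteMeasure ρ] → Integrable f ρ :=
    fun ρ _ => .of_bound hf.aestronglyMeasurable C (ae_of_all _ hfC)
  have hsplit : ∫ x, f x ∂μ - ∫ x, f x ∂ν =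
      (∫ x in s, f x ∂μ - ∫ x in s, f x ∂ν) - (∫ x in sᶜ, f x ∂ν - ∫ x in sᶜ, f x ∂μ) := by
    rw [← integral_add_compl hs (hint μ), ← integral_add_compl hs (hint ν)]
    abel
  have hon_s := norm_integral_sub_integral_le_of_le (restrict_le hs hνμ) hf hfC
  have hon_sc := norm_integral_sub_integral_le_of_le (restrict_le hs.compl hμν) hf hfC
  simp only [Measure.restrict_apply_univ] at hon_s hon_sc
  have hmass : (μ s - ν s).toReal + (ν sᶜ - μ sᶜ).toReal ≤ (tvDist μ ν).toReal := by
    rw [← ENNReal.toReal_add (by finiteness) (by finiteness)]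
    exact ENNReal.toReal_mono tvDist_ne_top (le_iSup₂_of_le s hs le_rfl)
  calc ‖∫ x, f x ∂μ - ∫ x, f x ∂ν‖
      ≤ C * (μ s - ν s).toReal + C * (ν sᶜ - μ sᶜ).toReal :=
        hsplit ▸ (norm_sub_le _ _).trans (add_le_add hon_s hon_sc)
    _ ≤ C * (tvDist μ ν).toReal := by rw [← mul_add]; gcongr

end Integrals

section Convolution

variable {M E : Type*} [Monoid M] [MeasurableSpace M] [MeasurableMul₂ M]
  [NormedAddCommGroup E] [NormedSpace ℝ E] {P μ : Measure M} {u : M → E} {C : ℝ}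

lemma integral_mconv_of_bound [IsFiniteMeasure P] [IsFiniteMeasure μ]
    (hu : StronglyMeasurable u) (huC : ∀ g, ‖u g‖ ≤ C) :
    ∫ g, u g ∂(P ∗ₘ μ) = ∫ g, ∫ h, u (h * g) ∂P ∂μ := by
  have hprod : Integrable (fun p : M × M => u (p.1 * p.2)) (P.prod μ) :=
    .of_bound (hu.comp_measurable measurable_mul).aestronglyMeasurable C
      (ae_of_all _ fun _ => huC _)
  rw [integral_mconv (.of_bound hu.aestronglyMeasurable C (ae_of_all _ huC))]
  exact integral_integral_swap hprod

lemma sq_norm_integral_le_integral_sq_norm_integral_add_tvDist [CompleteSpace E]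
    [IsProbabilityMeasure P] [IsProbabilityMeasure μ] (hu : StronglyMeasurable u) (huC : ∀ g, ‖u g‖ ≤ C) :
    ‖∫ g, u g ∂μ‖ ^ 2 ≤
      ∫ g, ‖∫ h, u (h * g) ∂P‖ ^ 2 ∂μ + 2 * C ^ 2 * (tvDist (P ∗ₘ μ) μ).toReal := by
  have hC : 0 ≤ C := (norm_nonneg _).trans (huC 1)
  set v : M → E := fun g => ∫ h, u (h * g) ∂P
  have hv : StronglyMeasurable v := (hu.comp_measurable measurable_mul).integral_prod_left'
  have hvC : ∀ g, ‖v g‖ ≤ C := fun g => norm_integral_le_of_forall_norm_le fun h => huC _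
  have hv2 : Integrable (fun g => ‖v g‖ ^ 2) μ :=
    .of_bound (hv.norm.pow 2).aestronglyMeasurable (C ^ 2) (ae_of_all _ fun g => by
      simpa using pow_le_pow_left₀ (norm_nonneg _) (hvC g) 2)
  have hjensen : ‖∫ g, u g ∂(P ∗ₘ μ)‖ ^ 2 ≤ ∫ g, ‖v g‖ ^ 2 ∂μ := by
    rw [integral_mconv_of_bound hu huC]
    exact sq_norm_integral_le_integral_sq_norm
      (.of_bound hv.aestronglyMeasurable C (ae_of_all _ hvC)) hv2
  have htv : ‖∫ g, u g ∂μ - ∫ g, u g ∂(P ∗ₘ μ)‖ ≤ C * (tvDist (P ∗ₘ μ) μ).toReal := by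
    rw [norm_sub_rev]
    exact norm_integral_sub_integral_le_mul_tvDist hu hC huC
  calc ‖∫ g, u g ∂μ‖ ^ 2
      ≤ ‖∫ g, u g ∂(P ∗ₘ μ)‖ ^ 2 + 2 * C * ‖∫ g, u g ∂μ - ∫ g, u g ∂(P ∗ₘ μ)‖ :=
        sq_norm_le_sq_norm_add_of_norm_le (norm_integral_le_of_forall_norm_le huC)
          (norm_integral_le_of_forall_norm_le huC)
    _ ≤ ∫ g, ‖v g‖ ^ 2 ∂μ + 2 * C * (C * (tvDist (P ∗ₘ μ) μ).toReal) := by gcongr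
    _ = _ := by ring

end Convolution

theorem van_der_corput_general {G : Type*} [Group G] [TopologicalSpace G] [IsTopologicalGroup G]
    [SecondCountableTopology G] [MeasurableSpace G] [BorelSpace G]
    {H : Type*} [NormedAddCommGroup H] [InnerProductSpace ℝ H] [CompleteSpace H]
    (F : ℕ → Measure G) (hF : IsLeftReiter F)
    (u : G → H) (hu : StronglyMeasurable u) (C : ℝ) (huC : ∀ g, ‖u g‖ ≤ C)
    (P : Measure G) (hP : IsProbabilityMeasure P) :
    limsup (fun m => ‖∫ g, u g ∂(F m)‖ ^ 2) atTop ≤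
      limsup (fun m => ∫ g, ∫ l, ∫ h, ⟪u (h * g), u (l * g)⟫ ∂P ∂P ∂(F m)) atTop := by
  obtain ⟨hFprob, hFlim⟩ := hF
  set v : G → H := fun g => ∫ h, u (h * g) ∂P
  have hexpand : ∀ g, ∫ l, ∫ h, ⟪u (h * g), u (l * g)⟫ ∂P ∂P = ‖v g‖ ^ 2 := fun g =>
    (sq_norm_integral_eq_integral_integral_inner (.of_bound
      (hu.comp_measurable (measurable_mul_const g)).aestronglyMeasurable C
      (ae_of_all _ fun h => huC _))).symm
  simp_rw [hexpand]
  have hbound : ∀ m, |∫ g, ‖v g‖ ^ 2 ∂(F m)| ≤ C ^ 2 := fun m => by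
    have := hFprob m
    have hvC : ∀ g, ‖‖v g‖ ^ 2‖ ≤ C ^ 2 := fun g => by
      simpa using pow_le_pow_left₀ (norm_nonneg _)
        (norm_integral_le_of_forall_norm_le fun h => huC (h * g)) 2
    simpa using norm_integral_le_of_forall_norm_le hvC
  have hkey : ∀ m, ‖∫ g, u g ∂(F m)‖ ^ 2 ≤
      ∫ g, ‖v g‖ ^ 2 ∂(F m) + 2 * C ^ 2 * (tvDist (P ∗ₘ F m) (F m)).toReal := fun m => by
    have := hFprob m
    exact sq_norm_integral_le_integral_sq_norm_integral_add_tvDist hu huC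
  have htv : Tendsto (fun m => 2 * C ^ 2 * (tvDist (P ∗ₘ F m) (F m)).toReal) atTop (𝓝 0) := by
    simpa using ((ENNReal.tendsto_toReal ENNReal.zero_ne_top).comp (hFlim P hP)).const_mul
      (2 * C ^ 2)
  exact limsup_le_limsup_of_le_add (.of_forall hkey) htv
    (isBoundedUnder_of ⟨0, fun m => sq_nonneg _⟩).isCoboundedUnder_le
    (isBoundedUnder_of ⟨C ^ 2, fun m => (abs_le.1 (hbound m)).2⟩)
    (isBoundedUnder_of ⟨-C ^ 2, fun m => (abs_le.1 (hbound m)).1⟩).isCoboundedUnder_le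

/-- Van der Corput lemma: for a bounded measurable Hilbert-space-valued function `u`
on a lcsc group with a left Reiter sequence `F`, and for every probability Radon
measure `P`,
`limsup_m ‖∫ u_g dF_m(g)‖² ≤ limsup_m ∫∫∫ ⟨u_{hg}, u_{lg}⟩ dP(h) dP(l) dF_m(g)`;
i.e. the left-hand side is at most the infimum of the right-hand side over all `P`. -/
theorem van_der_corput {G : Type*} [Group G] [TopologicalSpace G] [IsTopologicalGroup G]
    [LocallyCompactSpace G] [SecondCountableTopology G] [MeasurableSpace G] [BorelSpace G]
    {H : Type*} [NormedAddCommGroup H] [InnerProductSpace ℝ H] [CompleteSpace H]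
    (F : ℕ → Measure G) (hF : IsLeftReiter F)
    (u : G → H) (hu : StronglyMeasurable u) (C : ℝ) (huC : ∀ g, ‖u g‖ ≤ C)
    (P : Measure G) (hP : IsProbabilityMeasure P) :
    limsup (fun m => ‖∫ g, u g ∂(F m)‖ ^ 2) atTop ≤
      limsup (fun m => ∫ g, ∫ l, ∫ h, ⟪u (h * g), u (l * g)⟫ ∂P ∂P ∂(F m)) atTop :=
  van_der_corput_general F hF u hu C huC P hP
end

section
/- Let (X_i, 𝒳_i, μ_i), i ∈ I, be inner and outer regular Borel probability spaces on topological spaces, and let μ be a finitely additive nonnegative set function on the semiring of cylinder sets ∏_i A_i (with A_i ∈ 𝒳_i and A_i ≠ X_i for only finitely many i) satisfying μ(∏_i A_i) ≤ min_i μ_i(A_i). Then μ extends uniquely to a countably additive Borel probability measure on the product space (∏_i X_i, ⊗_i 𝒳_i). -/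
/-!
Cylinder sets form a semiring on which `μ` is an additive content, so by Carathéodory's theorem
it extends to a measure once it is σ-subadditive; the extension is unique because cylinders form
a π-system generating the product σ-algebra.

For σ-subadditivity, let `∏ A_i ⊆ ⋃ₙ ∏ Bₙ_i`. Domination turns coordinatewise approximations
into approximations of the content: each `Bₙ` is enlarged to an open cylinder `Uₙ` at cost `δₙ`,
and on the countably many coordinates involved we pick compact `K_i ⊆ A_i` carrying all but `η_i`
of `μ_i (A_i)`. By Tychonoff, `∏ K_i` is covered by finitely many `Uₙ`. On the finitely many
coordinates these `Uₙ` constrain, `A_i` is shrunk to a measurable hull `M_i ⊆ A_i` of `K_i`, at a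
cost `∑ η_i`; the part of `∏ M_i` outside the `Uₙ` is null, because each cylinder in it has a
coordinate that lies in `M_i` but misses `K_i`. The hulls are needed since, without a separation
axiom, compact sets need be neither closed nor measurable.
-/

open MeasureTheory Set

/-- A family `A : ∀ i, Set (X i)` is a (measurable) cylinder datum if each `A i` is
measurable and `A i ≠ univ` for only finitely many `i`. The corresponding cylinder
set is `Set.pi univ A`. -/
def IsCylinderDatum {ι : Type*} {X : ι → Type*} [∀ i, MeasurableSpace (X i)]
    (A : ∀ i, Set (X i)) : Prop :=
  (∀ i, MeasurableSet (A i)) ∧ {i | A i ≠ Set.univ}.Finite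

open scoped ENNReal

section PiUpdate

variable {ι : Type*} {X : ι → Type*} [DecidableEq ι]

lemma Set.mem_univ_pi_update_iff {C : ∀ i, Set (X i)} {j : ι} {s : Set (X j)} {x : ∀ i, X i} :
    x ∈ pi univ (Function.update C j s) ↔ x j ∈ s ∧ ∀ i ≠ j, x i ∈ C i := by
  simp only [mem_univ_pi]
  exact Function.forall_update_iff C (p := fun i t => x i ∈ t)

lemma Set.univ_pi_sdiff_eq_union_update (A B : ∀ i, Set (X i)) (j : ι) :
    pi univ A \ pi univ B = (pi univ A \ pi univ (Function.update B j univ)) ∪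
      pi univ (Function.update (fun i => A i ∩ B i) j (A j \ B j)) := by
  ext x
  rw [← Function.update_eq_self j A, ← Function.update_eq_self j B]
  simp only [mem_sdiff, mem_union, mem_univ_pi_update_iff, Function.update_idem, mem_univ,
    true_and, mem_inter_iff, forall_and, Function.update_self]
  simp only [Function.update_eq_self]
  tauto

end PiUpdate

lemma Set.univ_pi_eq_pi_ne_univ {ι : Type*} {X : ι → Type*} (A : ∀ i, Set (X i)) :
    pi univ A = pi {i | A i ≠ univ} A := by
  ext x
  simp only [mem_pi, mem_univ, true_imp_iff]
  refine ⟨fun h i _ => h i, fun h i => ?_⟩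
  by_cases hi : A i = univ
  · simp [hi]
  · exact h i hi

lemma Finset.sum_union_le_add {α M : Type*} [DecidableEq α] [AddCommMonoid M] [PartialOrder M]
    [CanonicallyOrderedAdd M] (s t : Finset α) (f : α → M) :
    ∑ x ∈ s ∪ t, f x ≤ ∑ x ∈ s, f x + ∑ x ∈ t, f x :=
  le_self_add.trans_eq Finset.sum_union_inter

lemma ENNReal.exists_ne_zero_forall_sum_le_of_countable {ι : Type*} {J : Set ι}
    (hJ : J.Countable) {ε : ℝ≥0∞} (hε : ε ≠ 0) :
    ∃ η : ι → ℝ≥0∞, (∀ i, η i ≠ 0) ∧ (∀ i, η i ≤ ε) ∧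
      ∀ F : Finset ι, ↑F ⊆ J → ∑ i ∈ F, η i ≤ ε := by
  classical
  have := hJ.to_subtype
  obtain ⟨η, hη0, hη⟩ := ENNReal.exists_pos_sum_of_countable' hε J
  refine ⟨fun i => if h : i ∈ J then η ⟨i, h⟩ else ε, fun i => ?_, fun i => ?_, fun F hF => ?_⟩
  · dsimp only
    split_ifs
    exacts [(hη0 _).ne', hε]
  · dsimp only
    split_ifs
    exacts [(ENNReal.le_tsum _).trans hη.le, le_rfl]
  · rw [← Finset.sum_subtype_of_mem _ (p := (· ∈ J)) hF]
    refine (Finset.sum_le_sum fun j _ => ?_).trans ((ENNReal.sum_le_tsum _).trans hη.le)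
    rw [dif_pos j.2]

lemma MeasureTheory.addContent_le_sum_of_forall_subset_sdiff_eq_zero {α : Type*}
    {C : Set (Set α)} (hC : IsSetSemiring C) (m : AddContent ℝ≥0∞ C) {s : Set α} (hs : s ∈ C)
    {T : Finset (Set α)} (hT : ↑T ⊆ C) (h : ∀ t ∈ C, t ⊆ s \ ⋃₀ T → m t = 0) :
    m s ≤ ∑ u ∈ T, m u := by
  classical
  obtain ⟨I, hIC, -, hI⟩ := hC.exists_disjoint_finset_sdiff_eq hs hT
  have hcover : s ⊆ ⋃₀ ↑(T ∪ I) := fun x hx => by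
    by_cases hxT : x ∈ ⋃₀ (T : Set (Set α))
    · exact sUnion_mono (by simp) hxT
    · exact sUnion_mono (by simp) (hI ▸ ⟨hx, hxT⟩ : x ∈ ⋃₀ (I : Set (Set α)))
  calc m s ≤ ∑ u ∈ T ∪ I, m u :=
        addContent_le_sum_of_subset_sUnion hC (by simp [hT, hIC]) hs hcover
    _ ≤ ∑ u ∈ T, m u + ∑ u ∈ I, m u := Finset.sum_union_le_add T I m
    _ = ∑ u ∈ T, m u := by
        rw [Finset.sum_eq_zero fun t ht => h t (hIC ht) (hI ▸ subset_sUnion_of_mem ht), add_zero]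

lemma MeasurableSet.exists_isCompact_subset_measurableSet_sdiff_lt {α : Type*}
    [TopologicalSpace α] [MeasurableSpace α] {ν : Measure α} [IsFiniteMeasure ν] [ν.InnerRegular]
    {A : Set α} (hA : MeasurableSet A) {ε : ℝ≥0∞} (hε : ε ≠ 0) :
    ∃ K M, IsCompact K ∧ K ⊆ M ∧ M ⊆ A ∧ MeasurableSet M ∧ ν (A \ M) < ε ∧
      ∀ E ⊆ M, MeasurableSet E → Disjoint E K → ν E = 0 := by
  obtain ⟨K, hKA, hK, hAK⟩ := hA.exists_isCompact_lt_add (measure_ne_top ν A) hε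
  have hM : MeasurableSet (toMeasurable ν K ∩ A) := (measurableSet_toMeasurable _ _).inter hA
  refine ⟨K, toMeasurable ν K ∩ A, hK, subset_inter (subset_toMeasurable _ _) hKA,
    inter_subset_right, hM, ?_, fun E hEM hE hEK => ?_⟩
  · rw [measure_sdiff inter_subset_right hM.nullMeasurableSet (measure_ne_top _ _),
      Measure.measure_toMeasurable_inter hA (measure_ne_top _ _), inter_eq_left.2 hKA]
    exact ENNReal.sub_lt_of_lt_add (measure_mono hKA) (add_comm (ν K) ε ▸ hAK)
  · have := Measure.measure_toMeasurable_inter hE (measure_ne_top ν K)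
    rwa [inter_eq_right.2 (hEM.trans inter_subset_left), hEK.symm.inter_eq, measure_empty] at this

lemma exists_finset_forall_mem_univ_pi_of_isCompact {ι : Type*} {X : ι → Type*}
    [∀ i, TopologicalSpace (X i)] {K : ∀ i, Set (X i)} (hK : ∀ i, IsCompact (K i))
    (hK_ne : ∀ i, (K i).Nonempty) {U : ℕ → ∀ i, Set (X i)} (hU : ∀ n i, IsOpen (U n i))
    (hU_fin : ∀ n, {i | U n i ≠ univ}.Finite) (hKU : pi univ K ⊆ ⋃ n, pi univ (U n)) :
    ∃ t : Finset ℕ, ∀ x : ∀ i, X i, (∀ n ∈ t, ∀ i, U n i ≠ univ → x i ∈ K i) →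
      ∃ n ∈ t, x ∈ pi univ (U n) := by
  classical
  obtain ⟨t, ht⟩ := (isCompact_univ_pi hK).elim_finite_subcover _
    (fun n => univ_pi_eq_pi_ne_univ (U n) ▸ isOpen_set_pi (hU_fin n) fun i _ => hU n i) hKU
  choose k hk using hK_ne
  refine ⟨t, fun x hx => ?_⟩
  let y i := if ∃ n ∈ t, U n i ≠ univ then x i else k i
  have hy : y ∈ pi univ K := fun i _ => by
    by_cases h : ∃ n ∈ t, U n i ≠ univ
    · have : y i = x i := if_pos h
      obtain ⟨n, hn, hni⟩ := h
      exact this ▸ hx n hn i hni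
    · have : y i = k i := if_neg h
      exact this ▸ hk i
  obtain ⟨n, hn, hyn⟩ := mem_iUnion₂.1 (ht hy)
  refine ⟨n, hn, fun i _ => ?_⟩
  by_cases hi : U n i = univ
  · simp [hi]
  · have : y i = x i := if_pos ⟨n, hn, hi⟩
    exact this ▸ hyn i trivial

section CylinderDatum

variable {ι : Type*} {X : ι → Type*} [∀ i, MeasurableSpace (X i)] {A B : ∀ i, Set (X i)}

lemma isCylinderDatum_univ : IsCylinderDatum (fun i => (univ : Set (X i))) :=
  ⟨fun _ => .univ, by simp⟩

namespace IsCylinderDatum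

lemma inter (hA : IsCylinderDatum A) (hB : IsCylinderDatum B) :
    IsCylinderDatum (fun i => A i ∩ B i) := by
  refine ⟨fun i => (hA.1 i).inter (hB.1 i), (hA.2.union hB.2).subset fun i hi => ?_⟩
  by_contra h
  simp_all

lemma update [DecidableEq ι] (hA : IsCylinderDatum A) (j : ι) {s : Set (X j)}
    (hs : MeasurableSet s) : IsCylinderDatum (Function.update A j s) := by
  refine ⟨fun i => ?_, (hA.2.insert j).subset fun i hi => ?_⟩
  · rcases eq_or_ne i j with rfl | hij <;> simp [*, hA.1 i]
  · rcases eq_or_ne i j with rfl | hij <;> simp_all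

lemma measurableSet_univ_pi (hA : IsCylinderDatum A) : MeasurableSet (pi univ A) :=
  univ_pi_eq_pi_ne_univ A ▸ .pi hA.2.countable fun i _ => hA.1 i

end IsCylinderDatum

end CylinderDatum

namespace CouplingExtension

variable {ι : Type*} {X : ι → Type*} [∀ i, MeasurableSpace (X i)] {A B : ∀ i, Set (X i)}

variable (X) in
def cylinders : Set (Set (∀ i, X i)) :=
  {s | ∃ A, IsCylinderDatum A ∧ pi univ A = s}

lemma inter_mem_cylinders {s t : Set (∀ i, X i)} (hs : s ∈ cylinders X)
    (ht : t ∈ cylinders X) : s ∩ t ∈ cylinders X := by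
  obtain ⟨A, hA, rfl⟩ := hs
  obtain ⟨B, hB, rfl⟩ := ht
  exact ⟨_, hA.inter hB, pi_inter_distrib⟩

lemma generateFrom_cylinders :
    MeasurableSpace.generateFrom (cylinders X) = MeasurableSpace.pi := by
  classical
  refine le_antisymm (MeasurableSpace.generateFrom_le ?_) ?_
  · rintro _ ⟨A, hA, rfl⟩
    exact hA.measurableSet_univ_pi
  · rw [MeasurableSpace.pi_eq_generateFrom_projections]
    refine MeasurableSpace.generateFrom_mono ?_
    rintro _ ⟨i, s, hs, rfl⟩
    refine ⟨_, isCylinderDatum_univ.update i hs, ?_⟩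
    ext x
    rw [mem_univ_pi_update_iff]
    simp

lemma ext_of_forall_univ_pi_eq {ν ν' : Measure (∀ i, X i)} [IsFiniteMeasure ν]
    (h : ∀ A, IsCylinderDatum A → ν (pi univ A) = ν' (pi univ A)) : ν = ν' :=
  ext_of_generate_finite (cylinders X) generateFrom_cylinders.symm
    (fun _ hs _ ht _ => inter_mem_cylinders hs ht) (by rintro _ ⟨A, hA, rfl⟩; exact h A hA)
    (by simpa using h _ isCylinderDatum_univ)

lemma exists_disjoint_cylinders_sdiff_eq [DecidableEq ι] (hA : IsCylinderDatum A)
    (s : Finset ι) : ∀ B, IsCylinderDatum B → (∀ i ∉ s, B i = univ) →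
      ∃ I : Finset (Set (∀ i, X i)), ↑I ⊆ cylinders X ∧
        PairwiseDisjoint (I : Set (Set (∀ i, X i))) id ∧ pi univ A \ pi univ B = ⋃₀ I := by
  induction s using Finset.induction_on with
  | empty =>
    intro B _ hB
    refine ⟨∅, by simp, by simp, ?_⟩
    simp [show B = fun _ => univ from funext fun i => hB i (Finset.notMem_empty i)]
  | insert j s hj ih =>
    intro B hB hBs
    obtain ⟨I, hIC, hIdisj, hI⟩ := ih (Function.update B j univ) (hB.update j .univ)
      fun i hi => by
        rcases eq_or_ne i j with rfl | hij
        · simp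
        · simp [hij, hBs i (by simp [hij, hi])]
    set P := pi univ (Function.update (fun i => A i ∩ B i) j (A j \ B j))
    have hPB : P ⊆ pi univ (Function.update B j univ) := fun x hx => by
      rw [mem_univ_pi_update_iff] at hx ⊢
      exact ⟨trivial, fun i hi => (hx.2 i hi).2⟩
    refine ⟨insert P I, ?_, ?_, ?_⟩
    · rw [Finset.coe_insert, insert_subset_iff]
      exact ⟨⟨_, (hA.inter hB).update j ((hA.1 j).diff (hB.1 j)), rfl⟩, hIC⟩
    · rw [Finset.coe_insert]
      refine hIdisj.insert fun t ht _ => Disjoint.mono_left hPB ?_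
      exact disjoint_sdiff_right.mono_right (hI ▸ subset_sUnion_of_mem ht)
    · rw [univ_pi_sdiff_eq_union_update A B j, hI, Finset.coe_insert, sUnion_insert, union_comm]

lemma isSetSemiring_cylinders [Nonempty ι] : IsSetSemiring (cylinders X) where
  empty_mem := by
    classical
    obtain ⟨i⟩ := ‹Nonempty ι›
    exact ⟨_, isCylinderDatum_univ.update i .empty, univ_pi_eq_empty (Function.update_self ..)⟩
  inter_mem _ hs _ ht := inter_mem_cylinders hs ht
  sdiff_eq_sUnion' := by
    classical
    rintro _ ⟨A, hA, rfl⟩ _ ⟨B, hB, rfl⟩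
    exact exists_disjoint_cylinders_sdiff_eq hA hB.2.toFinset B hB fun i hi => by simpa using hi

section Content

variable (μ : (∀ i, Set (X i)) → ℝ≥0∞)

open Classical in
noncomputable def cylinderContent
    (hadd : ∀ (A : ∀ i, Set (X i)) (n : ℕ) (B : Fin n → ∀ i, Set (X i)),
      IsCylinderDatum A → (∀ m, IsCylinderDatum (B m)) →
      Set.pi univ A = ⋃ m, Set.pi univ (B m) →
      (Pairwise fun m m' => Disjoint (Set.pi univ (B m)) (Set.pi univ (B m'))) →
      μ A = ∑ m, μ (B m)) :
    AddContent ℝ≥0∞ (cylinders X) where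
  toFun s := if h : s ∈ cylinders X then μ h.choose else 0
  empty' := by
    split_ifs with h
    · obtain ⟨hA, hA_empty⟩ := h.choose_spec
      -- additivity over the empty family
      simpa using hadd _ 0 Fin.elim0 hA (fun k => k.elim0) (by simpa using hA_empty)
        fun k => k.elim0
    · rfl
  sUnion' I hI hdisj hU := by
    classical
    let e := I.equivFin
    let B : Fin I.card → ∀ i, Set (X i) := fun k => (hI (e.symm k).2).choose
    have hB (k) : IsCylinderDatum (B k) ∧ pi univ (B k) = e.symm k :=
      (hI (e.symm k).2).choose_spec
    rw [dif_pos hU, hadd _ _ B hU.choose_spec.1 (fun k => (hB k).1) ?_ ?_]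
    · rw [← Finset.sum_coe_sort I, ← e.symm.sum_comp]
      exact Finset.sum_congr rfl fun k _ => by rw [dif_pos (hI (e.symm k).2)]
    · ext x
      rw [hU.choose_spec.2]
      simp only [mem_sUnion, mem_iUnion, Finset.mem_coe]
      refine ⟨fun ⟨u, hu, hx⟩ => ⟨e ⟨u, hu⟩, ?_⟩,
        fun ⟨k, hk⟩ => ⟨_, (e.symm k).2, (hB k).2 ▸ hk⟩⟩
      rwa [(hB _).2, e.symm_apply_apply]
    · intro k k' hkk'
      rw [(hB k).2, (hB k').2]
      exact hdisj (e.symm k).2 (e.symm k').2 (Subtype.coe_injective.ne (e.symm.injective.ne hkk'))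

lemma cylinderContent_univ_pi {hadd} (hwd : ∀ A B : ∀ i, Set (X i), IsCylinderDatum A →
      IsCylinderDatum B → Set.pi univ A = Set.pi univ B → μ A = μ B)
    (hA : IsCylinderDatum A) : cylinderContent μ hadd (pi univ A) = μ A := by
  classical
  have h : pi univ A ∈ cylinders X := ⟨A, hA, rfl⟩
  exact (dif_pos h).trans (hwd _ _ h.choose_spec.1 hA h.choose_spec.2)

lemma exists_isProbabilityMeasure_of_isEmpty [IsEmpty ι]
    (hwd : ∀ A B : ∀ i, Set (X i), IsCylinderDatum A → IsCylinderDatum B →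
      Set.pi univ A = Set.pi univ B → μ A = μ B)
    (hone : μ (fun _ => Set.univ) = 1) :
    ∃ ν : Measure (∀ i, X i), IsProbabilityMeasure ν ∧
      ∀ A : ∀ i, Set (X i), IsCylinderDatum A → ν (Set.pi univ A) = μ A := by
  have h_univ (A : ∀ i, Set (X i)) : pi univ A = univ := by simp [univ_eq_empty_iff.2 ‹_›]
  refine ⟨Measure.dirac fun i => isEmptyElim i, inferInstance, fun A hA => ?_⟩
  rw [h_univ, measure_univ, ← hone]
  exact hwd _ _ isCylinderDatum_univ hA (by rw [h_univ, h_univ])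

end Content

variable (μi : ∀ i, Measure (X i)) in
def IsDominatedBy (m : AddContent ℝ≥0∞ (cylinders X)) : Prop :=
  ∀ A, IsCylinderDatum A → ∀ i, m (pi univ A) ≤ μi i (A i)

namespace IsDominatedBy

variable {μi : ∀ i, Measure (X i)} {m : AddContent ℝ≥0∞ (cylinders X)}

lemma addContent_le_add_sum [Nonempty ι] (hm : IsDominatedBy μi m) (hA : IsCylinderDatum A)
    (hB : IsCylinderDatum B) (s : Finset ι) (hs : ∀ i ∉ s, A i ⊆ B i) :
    m (pi univ A) ≤ m (pi univ B) + ∑ i ∈ s, μi i (A i \ B i) := by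
  classical
  let piece i := pi univ (Function.update A i (A i \ B i))
  have hpiece (i) : IsCylinderDatum (Function.update A i (A i \ B i)) :=
    hA.update i ((hA.1 i).diff (hB.1 i))
  have hcover : pi univ A ⊆ ⋃₀ ↑({pi univ B} ∪ s.image piece) := fun x hx => by
    by_cases hxB : x ∈ pi univ B
    · exact ⟨_, by simp, hxB⟩
    obtain ⟨i, hi⟩ : ∃ i, x i ∉ B i := by simpa [mem_univ_pi] using hxB
    have his : i ∈ s := by_contra fun h => hi (hs i h (hx i trivial))
    refine ⟨piece i, Finset.mem_union_right _ (Finset.mem_image_of_mem piece his),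
      mem_univ_pi_update_iff.2 ⟨⟨hx i trivial, hi⟩, fun j _ => hx j trivial⟩⟩
  calc m (pi univ A)
      ≤ ∑ u ∈ {pi univ B} ∪ s.image piece, m u :=
        addContent_le_sum_of_subset_sUnion isSetSemiring_cylinders
          (by simpa [insert_subset_iff] using ⟨⟨B, hB, rfl⟩, fun i _ => ⟨_, hpiece i, rfl⟩⟩)
          ⟨A, hA, rfl⟩ hcover
    _ ≤ m (pi univ B) + ∑ u ∈ s.image piece, m u := by
        simpa using Finset.sum_union_le_add {pi univ B} (s.image piece) m
    _ ≤ m (pi univ B) + ∑ i ∈ s, m (piece i) := by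
        gcongr
        exact Finset.sum_image_le_of_nonneg fun _ _ => zero_le
    _ ≤ m (pi univ B) + ∑ i ∈ s, μi i (A i \ B i) := by
        gcongr with i
        simpa using hm _ (hpiece i) i

lemma exists_isOpen_le_add [Nonempty ι] [∀ i, TopologicalSpace (X i)]
    [∀ i, OpensMeasurableSpace (X i)] [∀ i, IsFiniteMeasure (μi i)] [∀ i, (μi i).OuterRegular]
    (hm : IsDominatedBy μi m) (hB : IsCylinderDatum B) {η : ℝ≥0∞} (hη : η ≠ 0) :
    ∃ U, IsCylinderDatum U ∧ (∀ i, IsOpen (U i)) ∧ (∀ i, B i ⊆ U i) ∧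
      (∀ i, B i = univ → U i = univ) ∧ m (pi univ U) ≤ m (pi univ B) + η := by
  classical
  set s := hB.2.toFinset
  have hη' : η / s.card ≠ 0 := ENNReal.div_ne_zero.2 ⟨hη, ENNReal.natCast_ne_top _⟩
  have hV : ∀ i, ∃ V : Set (X i), IsOpen V ∧ B i ⊆ V ∧ (B i = univ → V = univ) ∧
      μi i (V \ B i) < η / s.card := fun i => by
    by_cases hi : B i = univ
    · exact ⟨univ, isOpen_univ, subset_univ _, fun _ => rfl, by simpa [hi] using hη'.bot_lt⟩
    · obtain ⟨V, hBV, hV, -, hVB⟩ :=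
        (hB.1 i).exists_isOpen_sdiff_lt (measure_ne_top (μi i) _) hη'
      exact ⟨V, hV, hBV, fun h => absurd h hi, hVB⟩
  choose U hUo hBU hU hUB using hV
  have hUd : IsCylinderDatum U :=
    ⟨fun i => (hUo i).measurableSet, hB.2.subset fun i hi h => hi (hU i h)⟩
  refine ⟨U, hUd, hUo, hBU, hU, ?_⟩
  calc m (pi univ U)
      ≤ m (pi univ B) + ∑ i ∈ s, μi i (U i \ B i) :=
        hm.addContent_le_add_sum hUd hB s fun i hi => by
          rw [hU i (by simpa [s] using hi)]
          simpa [s] using hi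
    _ ≤ m (pi univ B) + ∑ _i ∈ s, η / s.card := by gcongr with i; exact (hUB i).le
    _ ≤ m (pi univ B) + η := by
        rw [Finset.sum_const, nsmul_eq_mul]
        gcongr
        exact ENNReal.mul_div_le

lemma addContent_eq_zero_of_disjoint (hm : IsDominatedBy μi m) {D K e : ∀ i, Set (X i)}
    {S : Set ι} (hD : ∀ i ∈ S, ∀ E ⊆ D i, MeasurableSet E → Disjoint E (K i) → μi i E = 0)
    (he : IsCylinderDatum e) (heD : pi univ e ⊆ pi univ D)
    (heK : Disjoint (pi univ e) {x | ∀ i ∈ S, x i ∈ K i}) : m (pi univ e) = 0 := by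
  rcases (pi univ e).eq_empty_or_nonempty with h | hne
  · rw [h, addContent_empty]
  have heD' : ∀ i, e i ⊆ D i := (univ_pi_subset_univ_pi_iff.1 heD).resolve_right
    fun ⟨i, hi⟩ => hne.ne_empty (univ_pi_eq_empty hi)
  obtain ⟨i, hiS, hi⟩ : ∃ i ∈ S, Disjoint (e i) (K i) := by
    by_contra! h
    have hy : ∀ i, ∃ y ∈ e i, i ∈ S → y ∈ K i := fun i => by
      by_cases hiS : i ∈ S
      · obtain ⟨y, hy⟩ := not_disjoint_iff.1 (h i hiS)
        exact ⟨y, hy.1, fun _ => hy.2⟩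
      · obtain ⟨y, hy⟩ := univ_pi_nonempty_iff.1 hne i
        exact ⟨y, hy, fun h => absurd h hiS⟩
    choose y hye hyK using hy
    exact heK.ne_of_mem (fun i _ => hye i) hyK rfl
  exact le_antisymm ((hm e he i).trans (hD i hiS (e i) (heD' i) (he.1 i) hi).le) zero_le

lemma addContent_le_sum_of_cover [Nonempty ι] (hm : IsDominatedBy μi m)
    {D K : ∀ i, Set (X i)} {U : ℕ → ∀ i, Set (X i)} {t : Finset ℕ} (hD : IsCylinderDatum D)
    (hU : ∀ n, IsCylinderDatum (U n))
    (hnull : ∀ i, (∃ n ∈ t, U n i ≠ univ) →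
      ∀ E ⊆ D i, MeasurableSet E → Disjoint E (K i) → μi i E = 0)
    (hcover : ∀ x : ∀ i, X i, (∀ n ∈ t, ∀ i, U n i ≠ univ → x i ∈ K i) →
      ∃ n ∈ t, x ∈ pi univ (U n)) :
    m (pi univ D) ≤ ∑ n ∈ t, m (pi univ (U n)) := by
  classical
  calc m (pi univ D) ≤ ∑ u ∈ t.image fun n => pi univ (U n), m u := by
        refine addContent_le_sum_of_forall_subset_sdiff_eq_zero isSetSemiring_cylinders m
          ⟨D, hD, rfl⟩ ?_ ?_
        · rw [Finset.coe_image]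
          exact image_subset_iff.2 fun n _ => ⟨U n, hU n, rfl⟩
        rintro _ ⟨e, he, rfl⟩ hsub
        refine hm.addContent_eq_zero_of_disjoint hnull he (hsub.trans sdiff_subset) ?_
        refine disjoint_left.2 fun x hxe hxK => ?_
        obtain ⟨n, hn, hxn⟩ := hcover x fun n hn i hi => hxK i ⟨n, hn, hi⟩
        exact (hsub hxe).2 ⟨_, Finset.mem_image_of_mem _ hn, hxn⟩
    _ ≤ ∑ n ∈ t, m (pi univ (U n)) := Finset.sum_image_le_of_nonneg fun _ _ => zero_le

lemma addContent_le_sum_add_sum_of_cover [Nonempty ι] (hm : IsDominatedBy μi m)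
    (hA : IsCylinderDatum A) {K M : ∀ i, Set (X i)} (hM : ∀ i, MeasurableSet (M i))
    (hMK : ∀ i, ∀ E ⊆ M i, MeasurableSet E → Disjoint E (K i) → μi i E = 0)
    {U : ℕ → ∀ i, Set (X i)} (hU : ∀ n, IsCylinderDatum (U n)) {t : Finset ℕ}
    (hcover : ∀ x : ∀ i, X i, (∀ n ∈ t, ∀ i, U n i ≠ univ → x i ∈ K i) →
      ∃ n ∈ t, x ∈ pi univ (U n))
    (F : Finset ι) (hF : ∀ n ∈ t, ∀ i, U n i ≠ univ → i ∈ F) :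
    m (pi univ A) ≤ ∑ n ∈ t, m (pi univ (U n)) + ∑ i ∈ F, μi i (A i \ M i) := by
  classical
  let D i := if i ∈ F then M i else A i
  have hD : IsCylinderDatum D := by
    refine ⟨fun i => ?_, (hA.2.union F.finite_toSet).subset fun i hi => ?_⟩
    · dsimp only [D]
      split_ifs
      exacts [hM i, hA.1 i]
    · by_cases hiF : i ∈ F
      · exact .inr hiF
      · exact .inl (by simpa [D, hiF] using hi)
  calc m (pi univ A) ≤ m (pi univ D) + ∑ i ∈ F, μi i (A i \ D i) :=
        hm.addContent_le_add_sum hA hD F fun i hi => by simp [D, hi]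
    _ = m (pi univ D) + ∑ i ∈ F, μi i (A i \ M i) := by
        congr 1
        exact Finset.sum_congr rfl fun i hi => by simp [D, hi]
    _ ≤ ∑ n ∈ t, m (pi univ (U n)) + ∑ i ∈ F, μi i (A i \ M i) := by
        gcongr
        refine hm.addContent_le_sum_of_cover hD hU (fun i ⟨n, hn, hni⟩ => ?_) hcover
        simpa [D, hF n hn i hni] using hMK i

variable [Nonempty ι] [∀ i, TopologicalSpace (X i)] [∀ i, OpensMeasurableSpace (X i)]
  [∀ i, IsFiniteMeasure (μi i)] [∀ i, (μi i).InnerRegular] [∀ i, (μi i).OuterRegular]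

lemma addContent_le_tsum_add_add (hm : IsDominatedBy μi m) (hA : IsCylinderDatum A)
    {B : ℕ → ∀ i, Set (X i)} (hB : ∀ n, IsCylinderDatum (B n))
    (hAB : pi univ A ⊆ ⋃ n, pi univ (B n)) {ε : ℝ≥0∞} (hε : ε ≠ 0) :
    m (pi univ A) ≤ ∑' n, m (pi univ (B n)) + ε + ε := by
  classical
  obtain ⟨δ, hδ0, hδ⟩ := ENNReal.exists_pos_sum_of_countable' hε ℕ
  choose U hU hUo hBU hUB hUle using fun n => hm.exists_isOpen_le_add (hB n) (hδ0 n).ne'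
  obtain ⟨η, hη0, hηε, hη⟩ := ENNReal.exists_ne_zero_forall_sum_le_of_countable
    (hA.2.countable.union (countable_iUnion fun n => (hB n).2.countable)) hε
  choose K M hK hKM hMA hM hAM hMK using fun i =>
    (hA.1 i).exists_isCompact_subset_measurableSet_sdiff_lt (ν := μi i) (hη0 i)
  by_cases hK_empty : ∃ i, K i = ∅
  · obtain ⟨i, hi⟩ := hK_empty
    calc m (pi univ A) ≤ μi i (A i) := hm A hA i
      _ ≤ μi i (A i ∩ M i) + μi i (A i \ M i) := measure_le_inter_add_sdiff _ _ _
      _ ≤ ε := by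
          rw [hMK i _ inter_subset_right ((hA.1 i).inter (hM i)) (hi ▸ disjoint_empty _),
            zero_add]
          exact (hAM i).le.trans (hηε i)
      _ ≤ ∑' n, m (pi univ (B n)) + ε + ε := le_add_self
  push Not at hK_empty
  obtain ⟨t, ht⟩ := exists_finset_forall_mem_univ_pi_of_isCompact hK hK_empty hUo
    (fun n => (hU n).2) ((pi_mono fun i _ => (hKM i).trans (hMA i)).trans
      (hAB.trans (iUnion_mono fun n => pi_mono fun i _ => hBU n i)))
  let F := t.biUnion fun n => (hU n).2.toFinset
  have hF : ∀ n ∈ t, ∀ i, U n i ≠ univ → i ∈ F := fun n hn i hi => by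
    simpa [F] using ⟨n, hn, hi⟩
  calc m (pi univ A) ≤ ∑ n ∈ t, m (pi univ (U n)) + ∑ i ∈ F, μi i (A i \ M i) :=
        hm.addContent_le_sum_add_sum_of_cover hA hM hMK hU ht F hF
    _ ≤ ∑ n ∈ t, (m (pi univ (B n)) + δ n) + ∑ i ∈ F, η i := by
        gcongr with n _ i
        exacts [hUle n, (hAM i).le]
    _ ≤ ∑' n, m (pi univ (B n)) + ε + ε := by
        rw [Finset.sum_add_distrib]
        gcongr
        · exact ENNReal.sum_le_tsum _
        · exact (ENNReal.sum_le_tsum _).trans hδ.le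
        · refine hη F fun i hi => ?_
          obtain ⟨n, -, hn⟩ : ∃ n ∈ t, U n i ≠ univ := by simpa [F] using hi
          exact .inr (mem_iUnion.2 ⟨n, fun h => hn (hUB n i h)⟩)

theorem isSigmaSubadditive (hm : IsDominatedBy μi m) : m.IsSigmaSubadditive := by
  rintro f hf ⟨A, hA, hAf⟩
  choose B hB hBf using hf
  obtain rfl : f = fun n => pi univ (B n) := funext fun n => (hBf n).symm
  rw [← hAf]
  refine ENNReal.le_of_forall_pos_le_add fun ε hε _ => ?_
  have hε2 : (ε : ℝ≥0∞) / 2 ≠ 0 :=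
    ENNReal.div_ne_zero.2 ⟨by simpa using hε.ne', ENNReal.ofNat_ne_top⟩
  simpa [add_assoc, ENNReal.add_halves] using hm.addContent_le_tsum_add_add hA hB hAf.subset hε2

end IsDominatedBy

end CouplingExtension

open CouplingExtension in
/-- Extension of a finitely additive, dominated set function on cylinder sets of a
product of regular Borel probability spaces to a unique Borel probability measure on
the product σ-algebra. -/
theorem coupling_extension {ι : Type*} {X : ι → Type*}
    [∀ i, TopologicalSpace (X i)] [∀ i, MeasurableSpace (X i)] [∀ i, BorelSpace (X i)]
    (μi : ∀ i, Measure (X i)) [∀ i, IsProbabilityMeasure (μi i)]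
    [∀ i, (μi i).InnerRegular] [∀ i, (μi i).OuterRegular]
    (μ : (∀ i, Set (X i)) → ENNReal)
    -- `μ` is a well-defined function on the semiring of cylinder sets:
    (hwd : ∀ A B : ∀ i, Set (X i), IsCylinderDatum A → IsCylinderDatum B →
      Set.pi univ A = Set.pi univ B → μ A = μ B)
    -- normalization (the extension is to be a probability measure):
    (hone : μ (fun _ => Set.univ) = 1)
    -- domination: `μ(∏ A_i) ≤ min_i μ_i (A_i)`:
    (hdom : ∀ A : ∀ i, Set (X i), IsCylinderDatum A → ∀ i, μ A ≤ μi i (A i))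
    -- finite additivity on the semiring of cylinder sets:
    (hadd : ∀ (A : ∀ i, Set (X i)) (n : ℕ) (B : Fin n → ∀ i, Set (X i)),
      IsCylinderDatum A → (∀ m, IsCylinderDatum (B m)) →
      Set.pi univ A = ⋃ m, Set.pi univ (B m) →
      (Pairwise fun m m' => Disjoint (Set.pi univ (B m)) (Set.pi univ (B m'))) →
      μ A = ∑ m, μ (B m)) :
    ∃! ν : Measure (∀ i, X i), IsProbabilityMeasure ν ∧
      ∀ A : ∀ i, Set (X i), IsCylinderDatum A → ν (Set.pi univ A) = μ A := by
  refine existsUnique_of_exists_of_unique ?_ fun ν ν' ⟨_, hν⟩ ⟨_, hν'⟩ =>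
    ext_of_forall_univ_pi_eq fun A hA => (hν A hA).trans (hν' A hA).symm
  rcases isEmpty_or_nonempty ι with hι | hι
  · exact exists_isProbabilityMeasure_of_isEmpty μ hwd hone
  let m := cylinderContent μ hadd
  have hm (A) (hA : IsCylinderDatum A) : m (pi univ A) = μ A := cylinderContent_univ_pi μ hwd hA
  have hm_dom : IsDominatedBy μi m := fun A hA i => (hm A hA).trans_le (hdom A hA i)
  let ν := m.measure isSetSemiring_cylinders generateFrom_cylinders.ge hm_dom.isSigmaSubadditive
  have hν (A) (hA : IsCylinderDatum A) : ν (pi univ A) = μ A :=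
    (m.measure_eq _ generateFrom_cylinders.symm _ ⟨A, hA, rfl⟩).trans (hm A hA)
  exact ⟨ν, ⟨by simpa [hone] using hν _ isCylinderDatum_univ⟩, hν⟩
end

section
/- Let G be a topological group and f : G → ℂ a continuous function such that there exists a compact group K, a continuous homomorphism ι : G → K, and f' ∈ C(K) with f = f' ∘ ι. Then f is almost periodic, i.e., the set of all two-sided translates {g' ↦ f(h⁻¹ g' h') : h, h' ∈ G} is totally bounded in the supremum norm. -/
/-!
The map `(a, b) ↦ (x ↦ f' (a⁻¹ * x * b))` is continuous from the compact space `K × K` into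
`C(K, ℂ)` with the sup metric, so its range is totally bounded. Every two-sided translate of
`f = f' ∘ ι` is the pullback along `ι` of a point of that range, and pulling back along `ι` does
not increase sup distances.
-/

/-- A function `f : G → ℂ` is almost periodic if the set of its two-sided translates
`{g' ↦ f (h⁻¹ * g' * h') : h, h' ∈ G}` is totally bounded with respect to the
supremum metric: for every `ε > 0` there is a finite family of translates that is
`ε`-dense (in the sup norm) in the set of all translates. -/
def IsAlmostPeriodic {G : Type*} [Group G] (f : G → ℂ) : Prop :=
  ∀ ε : ℝ, 0 < ε → ∃ s : Finset (G × G),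
    ∀ h h' : G, ∃ p ∈ s, ∀ g : G, ‖f (h⁻¹ * g * h') - f (p.1⁻¹ * g * p.2)‖ ≤ ε

open Set Metric

theorem TotallyBounded.exists_finset_dist_lt_of_range {ι α : Type*} [PseudoMetricSpace α]
    {F : ι → α} (hF : TotallyBounded (range F)) {ε : ℝ} (hε : 0 < ε) :
    ∃ s : Finset ι, ∀ i, ∃ j ∈ s, dist (F i) (F j) < ε := by
  classical
  obtain ⟨t, htF, ht, hcover⟩ := finite_approx_of_totallyBounded hF ε hε
  have := ht.fintype
  choose pre hpre using fun y : t => htF y.2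
  refine ⟨Finset.univ.image pre, fun i => ?_⟩
  obtain ⟨y, hy, hiy⟩ := mem_iUnion₂.mp (hcover (mem_range_self i))
  exact ⟨pre ⟨y, hy⟩, Finset.mem_image_of_mem _ (Finset.mem_univ _), by rwa [hpre]⟩

namespace ContinuousMap

variable {K E : Type*} [Group K] [TopologicalSpace K] [IsTopologicalGroup K] [TopologicalSpace E]

def twoSidedTranslates (f : C(K, E)) : C(K × K, C(K, E)) :=
  (f.comp ⟨fun q : (K × K) × K => q.1.1⁻¹ * q.2 * q.1.2, by fun_prop⟩).curry

@[simp]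
theorem twoSidedTranslates_apply (f : C(K, E)) (a b x : K) :
    f.twoSidedTranslates (a, b) x = f (a⁻¹ * x * b) :=
  rfl

end ContinuousMap

theorem almostPeriodic_of_factors_through_compact_general {G : Type*} [Group G] (f : G → ℂ)
    (K : Type*) [Group K] [TopologicalSpace K] [IsTopologicalGroup K] [CompactSpace K]
    (ι : G →* K) (f' : C(K, ℂ)) (hfactor : f = f' ∘ ι) :
    IsAlmostPeriodic f := by
  intro ε hε
  set F : G × G → C(K, ℂ) := fun p => f'.twoSidedTranslates (ι p.1, ι p.2)
  have hF : TotallyBounded (range F) :=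
    (isCompact_range f'.twoSidedTranslates.continuous).totallyBounded.subset
      (range_comp_subset_range _ _)
  obtain ⟨s, hs⟩ := hF.exists_finset_dist_lt_of_range hε
  refine ⟨s, fun h h' => (hs (h, h')).imp fun p ⟨hp, hdist⟩ => ⟨hp, fun g => ?_⟩⟩
  have hg := ContinuousMap.dist_apply_le_dist (f := F (h, h')) (g := F p) (ι g)
  simpa [F, hfactor, dist_eq_norm] using hg.trans hdist.le

/-- A continuous function on a topological group that factors through a continuous
homomorphism into a compact group is almost periodic. -/
theorem almostPeriodic_of_factors_through_compact {G : Type*} [Group G] [TopologicalSpace G]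
    [IsTopologicalGroup G] (f : G → ℂ) (hf : Continuous f)
    (K : Type*) [Group K] [TopologicalSpace K] [IsTopologicalGroup K] [CompactSpace K]
    (ι : G →* K) (hι : Continuous ι) (f' : C(K, ℂ)) (hfactor : f = f' ∘ ι) :
    IsAlmostPeriodic f :=
  almostPeriodic_of_factors_through_compact_general f K ι f' hfactor
end

section
/- Let G be a topological group. Every matrix coefficient function g ↦ ⟨π(g)v, w⟩, where π : G → U(d) is a continuous finite-dimensional unitary representation and v, w ∈ ℂ^d, is an almost periodic function on G. Consequently every uniform limit of such matrix coefficients is almost periodic. -/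
/-! Through `Matrix.toEuclideanCLM`, a unitary representation is a representation by linear
isometries of `EuclideanSpace ℂ (Fin d)`, so the translate `g ↦ f (h⁻¹ * g * h')` of the
coefficient `f g = ⟪w, π g v⟫` is the coefficient `g ↦ ⟪π h w, π g (π h' v)⟫`. This depends
Lipschitz-continuously, uniformly in `g`, on the pair `(π h w, π h' v)`, which ranges over a
product of spheres, compact since `d` is finite; a finite net of it yields the finitely many
translates needed. Uniform limits are then handled by an `ε/3` argument. -/

open scoped Matrix

/-- The matrix coefficient `g ↦ ⟨π(g)v, w⟩` of a continuous finite-dimensional unitary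
representation `π : G → U(d)`. -/
noncomputable def matrixCoeff {G : Type*} [Group G] (d : ℕ)
    (π : G →* Matrix.unitaryGroup (Fin d) ℂ) (v w : Fin d → ℂ) : G → ℂ :=
  fun g => ∑ i, star (w i) * ((π g : Matrix (Fin d) (Fin d) ℂ).mulVec v) i

open scoped InnerProductSpace NNReal

section AlmostPeriodic

variable {G : Type*} [Group G]

theorem isAlmostPeriodic_of_totallyBounded_range {X : Type*} [PseudoMetricSpace X]
    {f : G → ℂ} (F : G × G → X) (hF : TotallyBounded (Set.range F)) (K : ℝ≥0)
    (hf : ∀ p q g, ‖f (p.1⁻¹ * g * p.2) - f (q.1⁻¹ * g * q.2)‖ ≤ K * dist (F p) (F q)) :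
    IsAlmostPeriodic f := by
  intro ε hε
  have hδ : 0 < ε / (K + 1) := by positivity
  obtain ⟨t, -, ht, hcover⟩ := Set.exists_subset_image_finite_and.mp <|
    Metric.finite_approx_of_totallyBounded (Set.image_univ ▸ hF) _ hδ
  refine ⟨ht.toFinset, fun h h' => ?_⟩
  obtain ⟨_, ⟨p, hp, rfl⟩, hdist⟩ := Set.mem_iUnion₂.mp <|
    hcover (Set.mem_image_of_mem F (Set.mem_univ (h, h')))
  refine ⟨p, ht.mem_toFinset.mpr hp, fun g => (hf (h, h') p g).trans ?_⟩
  calc (K : ℝ) * dist (F (h, h')) (F p) ≤ K * (ε / (K + 1)) := by gcongr; exact hdist.le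
    _ ≤ (K + 1) * (ε / (K + 1)) := by gcongr; linarith
    _ = ε := mul_div_cancel₀ ε (by positivity)

theorem isAlmostPeriodic_of_forall_approx {f : G → ℂ}
    (h : ∀ ε > 0, ∃ φ : G → ℂ, IsAlmostPeriodic φ ∧ ∀ g, ‖f g - φ g‖ ≤ ε) :
    IsAlmostPeriodic f := by
  intro ε hε
  obtain ⟨φ, hφ, hfφ⟩ := h (ε / 3) (by positivity)
  obtain ⟨s, hs⟩ := hφ (ε / 3) (by positivity)
  refine ⟨s, fun h h' => ?_⟩
  obtain ⟨p, hp, hφp⟩ := hs h h'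
  refine ⟨p, hp, fun g => ?_⟩
  set x := h⁻¹ * g * h'
  set y := p.1⁻¹ * g * p.2
  calc ‖f x - f y‖ = ‖(f x - φ x) + (φ x - φ y) + (φ y - f y)‖ := by
        rw [sub_add_sub_cancel, sub_add_sub_cancel]
    _ ≤ ‖f x - φ x‖ + ‖φ x - φ y‖ + ‖φ y - f y‖ := norm_add₃_le
    _ ≤ ε / 3 + ε / 3 + ε / 3 := by
      gcongr
      · exact hfφ x
      · exact hφp g
      · exact norm_sub_rev (φ y) (f y) ▸ hfφ y
    _ = ε := by ring

end AlmostPeriodic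

theorem norm_inner_sub_inner_le {𝕜 E : Type*} [RCLike 𝕜] [SeminormedAddCommGroup E]
    [InnerProductSpace 𝕜 E] (a a' b b' : E) :
    ‖⟪a, b⟫_𝕜 - ⟪a', b'⟫_𝕜‖ ≤ ‖a - a'‖ * ‖b‖ + ‖a'‖ * ‖b - b'‖ :=
  calc ‖⟪a, b⟫_𝕜 - ⟪a', b'⟫_𝕜‖ = ‖⟪a - a', b⟫_𝕜 + ⟪a', b - b'⟫_𝕜‖ := by
        rw [inner_sub_left, inner_sub_right, sub_add_sub_cancel]
    _ ≤ ‖a - a'‖ * ‖b‖ + ‖a'‖ * ‖b - b'‖ :=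
        (norm_add_le _ _).trans (add_le_add (norm_inner_le_norm _ _) (norm_inner_le_norm _ _))

section IsometricRepresentation

variable {G E : Type*} [Group G] [NormedAddCommGroup E] [InnerProductSpace ℂ E]

theorem inner_map_inv_mul_mul (ρ : G →* (E ≃ₗᵢ[ℂ] E)) (v w : E) (h g h' : G) :
    ⟪w, ρ (h⁻¹ * g * h') v⟫_ℂ = ⟪ρ h w, ρ g (ρ h' v)⟫_ℂ := by
  rw [map_mul, map_mul, map_inv, LinearIsometryEquiv.inner_map_eq_flip]
  rfl

theorem isAlmostPeriodic_inner_map [FiniteDimensional ℂ E] (ρ : G →* (E ≃ₗᵢ[ℂ] E)) (v w : E) :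
    IsAlmostPeriodic fun g => ⟪w, ρ g v⟫_ℂ := by
  refine isAlmostPeriodic_of_totallyBounded_range (fun p => (ρ p.1 w, ρ p.2 v))
    ?_ (‖v‖₊ + ‖w‖₊) fun p q g => ?_
  · refine ((isCompact_closedBall (0 : E) ‖w‖).prod
      (isCompact_closedBall (0 : E) ‖v‖)).totallyBounded.subset ?_
    rintro _ ⟨p, rfl⟩
    simp
  simp only [inner_map_inv_mul_mul]
  set D := dist (ρ p.1 w, ρ p.2 v) (ρ q.1 w, ρ q.2 v)
  have hw : ‖ρ p.1 w - ρ q.1 w‖ ≤ D := (dist_eq_norm _ _).symm.trans_le (le_max_left _ _)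
  have hv : ‖ρ p.2 v - ρ q.2 v‖ ≤ D := (dist_eq_norm _ _).symm.trans_le (le_max_right _ _)
  calc _ ≤ ‖ρ p.1 w - ρ q.1 w‖ * ‖ρ g (ρ p.2 v)‖ +
        ‖ρ q.1 w‖ * ‖ρ g (ρ p.2 v) - ρ g (ρ q.2 v)‖ := norm_inner_sub_inner_le _ _ _ _
    _ = ‖ρ p.1 w - ρ q.1 w‖ * ‖v‖ + ‖w‖ * ‖ρ p.2 v - ρ q.2 v‖ := by
        rw [← map_sub, LinearIsometryEquiv.norm_map, LinearIsometryEquiv.norm_map,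
          LinearIsometryEquiv.norm_map, LinearIsometryEquiv.norm_map]
    _ ≤ D * ‖v‖ + ‖w‖ * D := by gcongr
    _ = _ := by push_cast; ring

end IsometricRepresentation

noncomputable def Matrix.unitaryGroup.toLinearIsometryEquiv (n : Type*) [Fintype n]
    [DecidableEq n] : Matrix.unitaryGroup n ℂ →* (EuclideanSpace ℂ n ≃ₗᵢ[ℂ] EuclideanSpace ℂ n) :=
  Unitary.linearIsometryEquiv.toMonoidHom.comp
    (Unitary.map (StarMonoidHom.ofClass (Matrix.toEuclideanCLM (n := n) (𝕜 := ℂ)))).toMonoidHom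

theorem matrixCoeff_eq_inner {G : Type*} [Group G] (d : ℕ)
    (π : G →* Matrix.unitaryGroup (Fin d) ℂ) (v w : Fin d → ℂ) :
    matrixCoeff d π v w = fun g =>
      ⟪WithLp.toLp 2 w, (Matrix.unitaryGroup.toLinearIsometryEquiv (Fin d)).comp π g
        (WithLp.toLp 2 v)⟫_ℂ := by
  ext g
  exact (dotProduct_comm _ _).trans (EuclideanSpace.inner_toLp_toLp _ _).symm

theorem matrixCoeff_almostPeriodic_general {G : Type*} [Group G] [TopologicalSpace G] :
    (∀ (d : ℕ) (π : G →* Matrix.unitaryGroup (Fin d) ℂ),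
      Continuous (fun g => (π g : Matrix (Fin d) (Fin d) ℂ)) →
      ∀ v w : Fin d → ℂ, IsAlmostPeriodic (matrixCoeff d π v w)) ∧
    (∀ f : G → ℂ,
      (∀ ε : ℝ, 0 < ε → ∃ (d : ℕ) (π : G →* Matrix.unitaryGroup (Fin d) ℂ)
        (_ : Continuous (fun g => (π g : Matrix (Fin d) (Fin d) ℂ))) (v w : Fin d → ℂ),
        ∀ g : G, ‖f g - matrixCoeff d π v w g‖ ≤ ε) →
      IsAlmostPeriodic f) := by
  have coeff : ∀ (d : ℕ) (π : G →* Matrix.unitaryGroup (Fin d) ℂ) (v w : Fin d → ℂ),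
      IsAlmostPeriodic (matrixCoeff d π v w) := fun d π v w => by
    rw [matrixCoeff_eq_inner]
    exact isAlmostPeriodic_inner_map _ _ _
  refine ⟨fun d π _ => coeff d π, fun f hf => isAlmostPeriodic_of_forall_approx fun ε hε => ?_⟩
  obtain ⟨d, π, -, v, w, hfπ⟩ := hf ε hε
  exact ⟨_, coeff d π v w, hfπ⟩

/-- Every matrix coefficient of a continuous finite-dimensional unitary representation
is almost periodic; consequently, every uniform limit of matrix coefficients is
almost periodic. -/
theorem matrixCoeff_almostPeriodic {G : Type*} [Group G] [TopologicalSpace G]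
    [IsTopologicalGroup G] :
    (∀ (d : ℕ) (π : G →* Matrix.unitaryGroup (Fin d) ℂ),
      Continuous (fun g => (π g : Matrix (Fin d) (Fin d) ℂ)) →
      ∀ v w : Fin d → ℂ, IsAlmostPeriodic (matrixCoeff d π v w)) ∧
    (∀ f : G → ℂ,
      (∀ ε : ℝ, 0 < ε → ∃ (d : ℕ) (π : G →* Matrix.unitaryGroup (Fin d) ℂ)
        (_ : Continuous (fun g => (π g : Matrix (Fin d) (Fin d) ℂ))) (v w : Fin d → ℂ),
        ∀ g : G, ‖f g - matrixCoeff d π v w g‖ ≤ ε) →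
      IsAlmostPeriodic f) :=
  matrixCoeff_almostPeriodic_general
end

section
/- Let (X, μ) be a probability space with two commuting measure-preserving actions T₁, T₂ of an amenable group G, and let I₁, I₂ be the respective invariant σ-algebras. If in addition the joint action generated by T₁ and T₂ is ergodic (I₁ ∧ I₂ is trivial), then for all f₁ ∈ L^∞(I₁) and f₂ ∈ L^∞(I₂), ∫ f₁ f₂ dμ = ∫ f₁ dμ · ∫ f₂ dμ, i.e., I₁ and I₂ are independent. -/
/-!
Let `h = E[f₂ | I₁]`. Each `T₂ g` commutes with the `T₁`-action, so it is an automorphism of `I₁`;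
as `f₂` is `T₂`-invariant, `h` is `T₁`-invariant and a.e. `T₂`-invariant. A group with a Følner
sequence is countable, so intersecting the `T₂`-translates of a level set of `h` corrects it on a
null set to a set invariant under both actions. Joint ergodicity then makes `h` a.e. constant,
necessarily equal to `∫ f₂`, and pulling `f₁` out of the conditional expectation gives
`∫ f₁ f₂ = ∫ f₁ h = ∫ f₁ · ∫ f₂`.
-/

open MeasureTheory Filter Topology
open scoped symmDiff

/-- A left Følner sequence of finite subsets of a group. -/
def IsFolner {G : Type*} [Group G] [DecidableEq G] (F : ℕ → Finset G) : Prop :=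
  (∀ N, (F N).Nonempty) ∧ ∀ g : G,
    Tendsto (fun N => (((((F N).image (fun x => g * x))) ∆ (F N)).card : ℝ) / (F N).card)
      atTop (𝓝 0)

/-- The σ-algebra of sets invariant under an action `T : G → X → X`. -/
def invariantSigma {G X : Type*} [MeasurableSpace X] (T : G → X → X) : MeasurableSpace X where
  MeasurableSet' s := MeasurableSet s ∧ ∀ g, T g ⁻¹' s = s
  measurableSet_empty := ⟨MeasurableSet.empty, fun g => by simp⟩
  measurableSet_compl s hs := ⟨hs.1.compl, fun g => by
    rw [Set.preimage_compl, hs.2 g]⟩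
  measurableSet_iUnion f hf := ⟨MeasurableSet.iUnion (fun n => (hf n).1), fun g => by
    simp only [Set.preimage_iUnion]
    exact Set.iUnion_congr fun n => (hf n).2 g⟩

lemma IsFolner.countable {G : Type*} [Group G] [DecidableEq G] {F : ℕ → Finset G}
    (hF : IsFolner F) : Countable G := by
  have hcover : ∀ g : G, ∃ N, ∃ a ∈ F N, ∃ b ∈ F N, a * b⁻¹ = g := by
    intro g
    obtain ⟨N, hN⟩ := ((hF.2 g).eventually (gt_mem_nhds zero_lt_one)).exists
    refine ⟨N, ?_⟩
    -- otherwise `g • F N` is disjoint from `F N` and the Følner ratio is at least `1`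
    by_contra! hdisj
    have hsub : (F N).image (g * ·) ⊆ (F N).image (g * ·) ∆ F N := by
      intro y hy
      obtain ⟨x, hx, rfl⟩ := Finset.mem_image.1 hy
      exact Finset.mem_symmDiff.2 <| .inl ⟨hy, fun hgx => hdisj _ hgx x hx (by group)⟩
    have hcard := Finset.card_le_card hsub
    rw [Finset.card_image_of_injective _ (mul_right_injective g)] at hcard
    have hpos : (0 : ℝ) < (F N).card := by exact_mod_cast (hF.1 N).card_pos
    rw [div_lt_one hpos] at hN
    exact absurd hN (not_lt.2 (by exact_mod_cast hcard))
  refine Set.countable_univ_iff.1 <| (Set.countable_iUnion fun N =>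
    ((F N).finite_toSet.image2 (fun a b => a * b⁻¹) (F N).finite_toSet).countable).mono ?_
  intro g _
  obtain ⟨N, a, ha, b, hb, rfl⟩ := hcover g
  exact Set.mem_iUnion.2 ⟨N, Set.mem_image2_of_mem ha hb⟩

section InvariantSigma

variable {G X : Type*} [MeasurableSpace X] {T : G → X → X}

lemma invariantSigma_le : invariantSigma T ≤ ‹MeasurableSpace X› := fun _ hs => hs.1

lemma apply_eq_of_measurable_invariantSigma {Y : Type*} [MeasurableSpace Y]
    [MeasurableSingletonClass Y] {f : X → Y} (hf : Measurable[invariantSigma T] f) (g : G)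
    (x : X) : f (T g x) = f x := by
  have hx : x ∈ T g ⁻¹' (f ⁻¹' {f x}) := by rw [(hf (measurableSet_singleton (f x))).2 g]; rfl
  exact hx

lemma measurable_invariantSigma_of_commute {S : X → X} (hS : Measurable S)
    (hcomm : ∀ g x, T g (S x) = S (T g x)) :
    Measurable[invariantSigma T, invariantSigma T] S := fun s hs =>
  ⟨hS hs.1, fun g => by
    ext x
    simp only [Set.mem_preimage, ← hcomm]
    exact Set.ext_iff.1 (hs.2 g) (S x)⟩

end InvariantSigma

def measurableEquivOfAction {G X : Type*} [Group G] [MeasurableSpace X] (T : G → X → X)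
    (hT : ∀ g, Measurable (T g)) (hact : ∀ g g' x, T (g * g') x = T g (T g' x))
    (hid : ∀ x, T 1 x = x) (g : G) : X ≃ᵐ X where
  toFun := T g
  invFun := T g⁻¹
  left_inv x := by rw [← hact, inv_mul_cancel, hid]
  right_inv x := by rw [← hact, mul_inv_cancel, hid]
  measurable_toFun := hT g
  measurable_invFun := hT g⁻¹

theorem condExp_comp_measurableEquiv {α E : Type*} [NormedAddCommGroup E] [NormedSpace ℝ E]
    [CompleteSpace E] {m m₀ : MeasurableSpace α} {μ : Measure α} [IsFiniteMeasure μ]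
    (hm : m ≤ m₀) (e : α ≃ᵐ α) (he : MeasurePreserving e μ μ) (hem : Measurable[m, m] e)
    (hem' : Measurable[m, m] e.symm) {f : α → E} (hf : Integrable f μ) :
    μ[f ∘ e | m] =ᵐ[μ] μ[f | m] ∘ e := by
  refine (ae_eq_condExp_of_forall_setIntegral_eq hm (he.integrable_comp_emb
    e.measurableEmbedding |>.2 hf) (fun s _ _ => ?_) (fun s hs _ => ?_) ?_).symm
  · exact (he.integrable_comp_emb e.measurableEmbedding |>.2 integrable_condExp).integrableOn
  · have hes : MeasurableSet[m] (e '' s) := e.image_eq_preimage_symm s ▸ hem' hs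
    simp only [Function.comp_apply]
    rw [← he.setIntegral_image_emb e.measurableEmbedding, ← he.setIntegral_image_emb
      e.measurableEmbedding, setIntegral_condExp hm hf hes]
  · exact (stronglyMeasurable_condExp.comp_measurable hem).aestronglyMeasurable

def IsJointlyErgodic {G X : Type*} [MeasurableSpace X] (μ : Measure X) (T₁ T₂ : G → X → X) :
    Prop :=
  ∀ s : Set X, MeasurableSet s → (∀ g, T₁ g ⁻¹' s = s) → (∀ g, T₂ g ⁻¹' s = s) →
    μ s = 0 ∨ μ s = 1

section JointAction

variable {G X : Type*} [Group G] [Countable G] [MeasurableSpace X] {μ : Measure X}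
  {T₁ T₂ : G → X → X}

lemma exists_jointlyInvariant_ae_eq (hT₂ : ∀ g, Measurable (T₂ g))
    (hact₂ : ∀ g g' x, T₂ (g * g') x = T₂ g (T₂ g' x))
    (hcomm : ∀ g g' x, T₁ g (T₂ g' x) = T₂ g' (T₁ g x)) {s : Set X}
    (hs : MeasurableSet[invariantSigma T₁] s) (hs₂ : ∀ g, T₂ g ⁻¹' s =ᵐ[μ] s) :
    ∃ t, MeasurableSet[invariantSigma T₁] t ∧ (∀ g, T₂ g ⁻¹' t = t) ∧ t =ᵐ[μ] s := by
  refine ⟨⋂ g, T₂ g ⁻¹' s, .iInter fun g => measurable_invariantSigma_of_commute (hT₂ g)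
    (fun g' => hcomm g' g) hs, fun g => ?_, ?_⟩
  · calc T₂ g ⁻¹' ⋂ g', T₂ g' ⁻¹' s = ⋂ g', T₂ (g' * g) ⁻¹' s := by
          simp only [Set.preimage_iInter, ← Set.preimage_comp]
          exact Set.iInter_congr fun g' => by rw [funext (hact₂ g' g)]; rfl
      _ = ⋂ g', T₂ g' ⁻¹' s := (mul_right_surjective g).iInter_comp fun g' => T₂ g' ⁻¹' s
  · exact (Filter.EventuallyEq.countable_iInter hs₂).trans (by rw [Set.iInter_const]; rfl)

lemma exists_ae_eq_const_of_isJointlyErgodic [IsProbabilityMeasure μ]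
    (herg : IsJointlyErgodic μ T₁ T₂) (hT₂ : ∀ g, Measurable (T₂ g))
    (hact₂ : ∀ g g' x, T₂ (g * g') x = T₂ g (T₂ g' x))
    (hcomm : ∀ g g' x, T₁ g (T₂ g' x) = T₂ g' (T₁ g x)) {Y : Type*} [MeasurableSpace Y]
    [Nonempty Y] [MeasurableSpace.CountablySeparated Y] {f : X → Y}
    (hf : Measurable[invariantSigma T₁] f) (hf₂ : ∀ g, f ∘ T₂ g =ᵐ[μ] f) :
    ∃ c, f =ᵐ[μ] Function.const X c := by
  refine exists_eventuallyEq_const_of_forall_separating MeasurableSet fun U hU => ?_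
  obtain ⟨t, ht, ht₂, hts⟩ :=
    exists_jointlyInvariant_ae_eq hT₂ hact₂ hcomm (hf hU) fun g => (hf₂ g).fun_comp (· ∈ U)
  refine eventuallyConst_set.1 (hts.eventuallyConst_iff.1 (eventuallyConst_set.2 ?_))
  rcases herg t ht.1 ht.2 ht₂ with ht0 | ht1
  · exact .inr (measure_eq_zero_iff_ae_notMem.1 ht0)
  · exact .inl ((ae_mem_iff_measure_eq ht.1.nullMeasurableSet).2 (by rw [ht1, measure_univ]))

end JointAction

theorem integral_mul_eq_of_condExp_ae_eq_const {Ω : Type*} {m mΩ : MeasurableSpace Ω}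
    {μ : Measure Ω} [IsProbabilityMeasure μ] (hm : m ≤ mΩ) {f g : Ω → ℝ} {C c : ℝ}
    (hf : StronglyMeasurable[m] f) (hfC : ∀ᵐ x ∂μ, |f x| ≤ C) (hg : Integrable g μ)
    (hc : μ[g | m] =ᵐ[μ] Function.const Ω c) :
    ∫ x, f x * g x ∂μ = (∫ x, f x ∂μ) * (∫ x, g x ∂μ) := by
  have hgc : ∫ x, g x ∂μ = c := by
    rw [← integral_condExp hm, integral_congr_ae hc]
    simp
  calc ∫ x, f x * g x ∂μ = ∫ x, (μ[f * g | m]) x ∂μ := (integral_condExp hm).symm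
    _ = ∫ x, f x * c ∂μ :=
        integral_congr_ae <| (condExp_stronglyMeasurable_mul_of_bound hm hf hg C hfC).trans
          (EventuallyEq.rfl.mul hc)
    _ = (∫ x, f x ∂μ) * (∫ x, g x ∂μ) := by rw [integral_mul_const, hgc]

theorem invariant_sigma_indep_of_jointly_ergodic_general {G : Type*} [Group G] [DecidableEq G]
    (hamen : ∃ F : ℕ → Finset G, IsFolner F)
    {X : Type*} [MeasurableSpace X] (μ : Measure X) [IsProbabilityMeasure μ]
    (T₁ T₂ : G → X → X)
    (h2 : ∀ g, MeasurePreserving (T₂ g) μ μ)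
    (hact2 : ∀ g g' x, T₂ (g * g') x = T₂ g (T₂ g' x))
    (hid2 : ∀ x, T₂ 1 x = x)
    (hcomm : ∀ g g' x, T₁ g (T₂ g' x) = T₂ g' (T₁ g x))
    (herg : ∀ s : Set X, MeasurableSet s → (∀ g, T₁ g ⁻¹' s = s) → (∀ g, T₂ g ⁻¹' s = s) →
      μ s = 0 ∨ μ s = 1)
    (f₁ f₂ : X → ℝ)
    (hf₁ : Measurable[invariantSigma T₁] f₁) (hf₂ : Measurable[invariantSigma T₂] f₂)
    (hb₁ : ∃ C, ∀ x, |f₁ x| ≤ C) (hb₂ : ∃ C, ∀ x, |f₂ x| ≤ C) :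
    ∫ x, f₁ x * f₂ x ∂μ = (∫ x, f₁ x ∂μ) * (∫ x, f₂ x ∂μ) := by
  obtain ⟨F, hF⟩ := hamen
  have := hF.countable
  obtain ⟨C₁, hC₁⟩ := hb₁
  obtain ⟨C₂, hC₂⟩ := hb₂
  have hT₂ g : Measurable (T₂ g) := (h2 g).measurable
  have hf₂int : Integrable f₂ μ :=
    .of_bound (hf₂.mono invariantSigma_le le_rfl).aestronglyMeasurable C₂ (ae_of_all _ hC₂)
  have hT₂I₁ g : Measurable[invariantSigma T₁, invariantSigma T₁] (T₂ g) :=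
    measurable_invariantSigma_of_commute (hT₂ g) fun g' => hcomm g' g
  let e := measurableEquivOfAction T₂ hT₂ hact2 hid2
  have hinv g : μ[f₂ | invariantSigma T₁] ∘ T₂ g =ᵐ[μ] μ[f₂ | invariantSigma T₁] :=
    calc μ[f₂ | invariantSigma T₁] ∘ e g
        =ᵐ[μ] μ[f₂ ∘ e g | invariantSigma T₁] := (condExp_comp_measurableEquiv invariantSigma_le
          (e g) (h2 g) (hT₂I₁ g) (hT₂I₁ g⁻¹) hf₂int).symm
      _ = μ[f₂ | invariantSigma T₁] := by
          congr 1
          exact funext (apply_eq_of_measurable_invariantSigma hf₂ g)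
  obtain ⟨c, hc⟩ := exists_ae_eq_const_of_isJointlyErgodic herg hT₂ hact2 hcomm
    stronglyMeasurable_condExp.measurable hinv
  exact integral_mul_eq_of_condExp_ae_eq_const invariantSigma_le hf₁.stronglyMeasurable
    (ae_of_all _ hC₁) hf₂int hc

/-- If moreover the joint action spanned by `T₁` and `T₂` is ergodic (every set
invariant under both actions has measure `0` or `1`), then the invariant σ-algebras
`I₁` and `I₂` are independent: `∫ f₁ f₂ dμ = ∫ f₁ dμ · ∫ f₂ dμ` for bounded `f₁`
measurable w.r.t. `I₁` and `f₂` measurable w.r.t. `I₂`. -/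
theorem invariant_sigma_indep_of_jointly_ergodic {G : Type*} [Group G] [DecidableEq G]
    (hamen : ∃ F : ℕ → Finset G, IsFolner F)
    {X : Type*} [MeasurableSpace X] (μ : Measure X) [IsProbabilityMeasure μ]
    (T₁ T₂ : G → X → X)
    (h1 : ∀ g, MeasurePreserving (T₁ g) μ μ) (h2 : ∀ g, MeasurePreserving (T₂ g) μ μ)
    (hact1 : ∀ g g' x, T₁ (g * g') x = T₁ g (T₁ g' x))
    (hact2 : ∀ g g' x, T₂ (g * g') x = T₂ g (T₂ g' x))
    (hid1 : ∀ x, T₁ 1 x = x) (hid2 : ∀ x, T₂ 1 x = x)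
    (hcomm : ∀ g g' x, T₁ g (T₂ g' x) = T₂ g' (T₁ g x))
    (herg : ∀ s : Set X, MeasurableSet s → (∀ g, T₁ g ⁻¹' s = s) → (∀ g, T₂ g ⁻¹' s = s) →
      μ s = 0 ∨ μ s = 1)
    (f₁ f₂ : X → ℝ)
    (hf₁ : Measurable[invariantSigma T₁] f₁) (hf₂ : Measurable[invariantSigma T₂] f₂)
    (hb₁ : ∃ C, ∀ x, |f₁ x| ≤ C) (hb₂ : ∃ C, ∀ x, |f₂ x| ≤ C) :
    ∫ x, f₁ x * f₂ x ∂μ = (∫ x, f₁ x ∂μ) * (∫ x, f₂ x ∂μ) :=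
  invariant_sigma_indep_of_jointly_ergodic_general hamen μ T₁ T₂ h2 hact2 hid2 hcomm herg f₁ f₂ hf₁
    hf₂ hb₁ hb₂
end

section
/- Consider Y = {0,1,2}^G with the (1/3,1/3,1/3)-Bernoulli measure ν, for a countable group G, with the right shift (R^g y)_h = y_{hg} and left shift (L^g y)_h = y_{g⁻¹h}. Define X = Y³ with μ = ν×ν×ν, T₁ = R×Id×R, T₂ = L×R×Id. Let f(i,j,k) = 1 if i,j,k are pairwise distinct and 0 otherwise, F(y,z,w) = f(y_e, z_e, w_e), and A = {F = 1}. Then μ(A) = 6/27, and for every g ≠ e, μ(A ∩ T₁^g A ∩ T₁^g T₂^g A) = 6/729. -/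
/-!
Both sets are preimages, under the map reading finitely many coordinates of the three
components, of sets of colour patterns. Bernoulli measure makes every pattern on distinct
sites equally likely, so each measure is a count: `A` sees one site per component, giving
`6 / 3³`. Undoing the shifts, the triple intersection asks for pairwise distinct colours in
the three triangles `(x₁, y₁, z₁)`, `(x_{g⁻¹}, y₁, z_{g⁻¹})`, `(x₁, y_{g⁻¹}, z_{g⁻¹})`, which for
`g ≠ 1` involve six independent coordinates; the first triangle then determines the other
three coordinates, giving `6 / 3⁶`.
-/

open MeasureTheory

open scoped ENNReal

/-- The right Bernoulli shift `(R^g y)_h = y_{hg}`. -/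
def rightShift {G : Type*} [Group G] (g : G) (y : G → Fin 3) : G → Fin 3 :=
  fun h => y (h * g)

/-- The left Bernoulli shift `(L^g y)_h = y_{g⁻¹ h}`. -/
def leftShift {G : Type*} [Group G] (g : G) (y : G → Fin 3) : G → Fin 3 :=
  fun h => y (g⁻¹ * h)

theorem measure_preimage_finset_of_measure_fiber_eq {α β : Type*} [MeasurableSpace α]
    [MeasurableSpace β] [MeasurableSingletonClass β] (μ : Measure α) {f : α → β}
    (hf : Measurable f) {m : ℝ≥0∞} (hfib : ∀ b, μ (f ⁻¹' {b}) = m) (s : Finset β) :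
    μ (f ⁻¹' s) = s.card * m := by
  rw [← sum_measure_preimage_singleton s fun b _ => hf (measurableSet_singleton b)]
  simp [hfib]

theorem Measure.prod_preimage_prodMap_singleton {α β γ δ : Type*} [MeasurableSpace α]
    [MeasurableSpace β] (μ : Measure α) (ν : Measure β) [SFinite ν] (f : α → γ) (g : β → δ)
    (c : γ × δ) : μ.prod ν (Prod.map f g ⁻¹' {c}) = μ (f ⁻¹' {c.1}) * ν (g ⁻¹' {c.2}) := by
  rw [← Set.singleton_prod_singleton, Set.preimage_prod_map_prod, Measure.prod_prod]

theorem measure_prod_prod_preimage_finset {α β : Type*} [MeasurableSpace α] [MeasurableSpace β]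
    [MeasurableSingletonClass β] (ν : Measure α) [SFinite ν] {f : α → β} (hf : Measurable f)
    {m : ℝ≥0∞} (hfib : ∀ b, ν (f ⁻¹' {b}) = m) (s : Finset (β × β × β)) :
    ν.prod (ν.prod ν) (Prod.map f (Prod.map f f) ⁻¹' s) = s.card * m ^ 3 := by
  refine measure_preimage_finset_of_measure_fiber_eq _ (by fun_prop) (fun c => ?_) s
  rw [Measure.prod_preimage_prodMap_singleton, Measure.prod_preimage_prodMap_singleton,
    hfib, hfib, hfib, pow_three]

theorem measure_eval_preimage_singleton {ι : Type*} {ν : Measure (ι → Fin 3)}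
    (hcyl : ∀ (s : Finset ι) (c : ι → Fin 3),
      ν {y : ι → Fin 3 | ∀ g ∈ s, y g = c g} = (1 / 3 : ℝ≥0∞) ^ s.card)
    (a : ι) (x : Fin 3) : ν ((fun y : ι → Fin 3 => y a) ⁻¹' {x}) = 1 / 3 := by
  simpa [Set.preimage] using hcyl {a} fun _ => x

theorem measure_evalPair_preimage_singleton {ι : Type*} {ν : Measure (ι → Fin 3)}
    (hcyl : ∀ (s : Finset ι) (c : ι → Fin 3),
      ν {y : ι → Fin 3 | ∀ g ∈ s, y g = c g} = (1 / 3 : ℝ≥0∞) ^ s.card)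
    {a b : ι} (hab : a ≠ b) (x : Fin 3 × Fin 3) :
    ν ((fun y : ι → Fin 3 => (y a, y b)) ⁻¹' {x}) = (1 / 3) ^ 2 := by
  classical
  have h := hcyl {a, b} fun k => if k = a then x.1 else x.2
  rw [Finset.card_pair hab] at h
  convert h using 2
  ext y
  simp [Prod.ext_iff, hab.symm]

section Shifts

variable {G : Type*} [Group G]

@[simp]
theorem rightShift_rightShift (g h : G) (y : G → Fin 3) :
    rightShift g (rightShift h y) = rightShift (g * h) y :=
  funext fun k => by simp [rightShift, mul_assoc]

@[simp]
theorem rightShift_one (y : G → Fin 3) : rightShift 1 y = y :=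
  funext fun k => by simp [rightShift]

@[simp]
theorem leftShift_leftShift (g h : G) (y : G → Fin 3) :
    leftShift g (leftShift h y) = leftShift (g * h) y :=
  funext fun k => by simp [leftShift, mul_assoc]

@[simp]
theorem leftShift_one (y : G → Fin 3) : leftShift 1 y = y :=
  funext fun k => by simp [leftShift]

theorem image_rightShift_prod_rightShift_setOf_eval (g : G) (S : Set (Fin 3 × Fin 3 × Fin 3)) :
    (fun p : (G → Fin 3) × (G → Fin 3) × (G → Fin 3) =>
        (rightShift g p.1, p.2.1, rightShift g p.2.2)) ''
      {p | (p.1 1, p.2.1 1, p.2.2 1) ∈ S} = {p | (p.1 g⁻¹, p.2.1 1, p.2.2 g⁻¹) ∈ S} := by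
  rw [Set.image_eq_preimage_of_inverse
    (g := fun p => (rightShift g⁻¹ p.1, p.2.1, rightShift g⁻¹ p.2.2)) (fun p => by simp)
    (fun p => by simp)]
  ext p
  simp [rightShift]

theorem image_rightShift_leftShift_prod_rightShift_setOf_eval (g : G)
    (S : Set (Fin 3 × Fin 3 × Fin 3)) :
    (fun p : (G → Fin 3) × (G → Fin 3) × (G → Fin 3) =>
        (rightShift g (leftShift g p.1), rightShift g p.2.1, rightShift g p.2.2)) ''
      {p | (p.1 1, p.2.1 1, p.2.2 1) ∈ S} = {p | (p.1 1, p.2.1 g⁻¹, p.2.2 g⁻¹) ∈ S} := by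
  rw [Set.image_eq_preimage_of_inverse
    (g := fun p => (leftShift g⁻¹ (rightShift g⁻¹ p.1), rightShift g⁻¹ p.2.1,
      rightShift g⁻¹ p.2.2)) (fun p => by simp) (fun p => by simp)]
  ext p
  simp [rightShift, leftShift]

end Shifts

def pairwiseDistinctTriples : Finset (Fin 3 × Fin 3 × Fin 3) :=
  {c | c.1 ≠ c.2.1 ∧ c.2.1 ≠ c.2.2 ∧ c.1 ≠ c.2.2}

theorem card_pairwiseDistinctTriples : pairwiseDistinctTriples.card = 6 := by
  decide

def correlationPatterns : Finset ((Fin 3 × Fin 3) × (Fin 3 × Fin 3) × (Fin 3 × Fin 3)) :=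
  {c | (c.1.1, c.2.1.1, c.2.2.1) ∈ pairwiseDistinctTriples ∧
    (c.1.2, c.2.1.1, c.2.2.2) ∈ pairwiseDistinctTriples ∧
    (c.1.1, c.2.1.2, c.2.2.2) ∈ pairwiseDistinctTriples}

theorem card_correlationPatterns : correlationPatterns.card = 6 := by
  decide

theorem bernoulli_small_correlation_general {G : Type*} [Group G]
    (ν : Measure (G → Fin 3)) [IsProbabilityMeasure ν]
    (hcyl : ∀ (s : Finset G) (c : G → Fin 3),
      ν {y : G → Fin 3 | ∀ g ∈ s, y g = c g} = (1 / 3 : ENNReal) ^ s.card)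
    (μ : Measure ((G → Fin 3) × (G → Fin 3) × (G → Fin 3)))
    (hμ : μ = ν.prod (ν.prod ν))
    (T₁ T₂ : G → ((G → Fin 3) × (G → Fin 3) × (G → Fin 3)) →
      ((G → Fin 3) × (G → Fin 3) × (G → Fin 3)))
    (hT₁ : ∀ g p, T₁ g p = (rightShift g p.1, p.2.1, rightShift g p.2.2))
    (hT₂ : ∀ g p, T₂ g p = (leftShift g p.1, rightShift g p.2.1, p.2.2))
    (A : Set ((G → Fin 3) × (G → Fin 3) × (G → Fin 3)))
    (hA : A = {p | p.1 1 ≠ p.2.1 1 ∧ p.2.1 1 ≠ p.2.2 1 ∧ p.1 1 ≠ p.2.2 1}) :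
    μ A = 6 / 27 ∧
    ∀ g : G, g ≠ 1 →
      μ (A ∩ (T₁ g '' A) ∩ ((fun p => T₁ g (T₂ g p)) '' A)) = 6 / 729 := by
  obtain rfl : T₁ = _ := funext₂ hT₁
  obtain rfl : T₂ = _ := funext₂ hT₂
  have hA' : A = {p | (p.1 1, p.2.1 1, p.2.2 1) ∈ (pairwiseDistinctTriples : Set _)} := by
    simp [hA, pairwiseDistinctTriples]
  subst hμ
  refine ⟨?_, fun g hg => ?_⟩
  · calc _ = ν.prod (ν.prod ν) (Prod.map (fun y : G → Fin 3 => y 1) (Prod.map (· 1) (· 1)) ⁻¹'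
          pairwiseDistinctTriples) := congrArg _ hA'
      _ = 6 / 27 := by
        rw [measure_prod_prod_preimage_finset ν (measurable_pi_apply 1)
          (measure_eval_preimage_singleton hcyl 1), card_pairwiseDistinctTriples, one_div,
          ← ENNReal.inv_pow, ← div_eq_mul_inv]
        norm_num
  · calc _ = ν.prod (ν.prod ν) (Prod.map (fun y : G → Fin 3 => (y 1, y g⁻¹))
          (Prod.map (fun y => (y 1, y g⁻¹)) (fun y => (y 1, y g⁻¹))) ⁻¹' correlationPatterns) := by
          simp only [hA', image_rightShift_prod_rightShift_setOf_eval,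
            image_rightShift_leftShift_prod_rightShift_setOf_eval]
          congr 1
          ext p
          simp [correlationPatterns, and_assoc]
      _ = 6 / 729 := by
        rw [measure_prod_prod_preimage_finset ν (by fun_prop)
          (measure_evalPair_preimage_singleton hcyl (inv_ne_one.mpr hg).symm),
          card_correlationPatterns, one_div, ← pow_mul, ← ENNReal.inv_pow, ← div_eq_mul_inv]
        norm_num

/-- On `X = Y³` with `Y = {0,1,2}^G` carrying the `(1/3,1/3,1/3)`-Bernoulli measure
`ν`, with `T₁ = R × Id × R` and `T₂ = L × R × Id`, and `A` the set where the three
coordinates at the identity are pairwise distinct, one has `μ(A) = 6/27` and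
`μ(A ∩ T₁^g A ∩ T₁^g T₂^g A) = 6/729` for every `g ≠ e`. -/
theorem bernoulli_small_correlation {G : Type*} [Group G] [Countable G]
    (ν : Measure (G → Fin 3)) [IsProbabilityMeasure ν]
    (hcyl : ∀ (s : Finset G) (c : G → Fin 3),
      ν {y : G → Fin 3 | ∀ g ∈ s, y g = c g} = (1 / 3 : ENNReal) ^ s.card)
    (hmeas1 : ∀ g : G, Measurable (rightShift g)) (hmeas2 : ∀ g : G, Measurable (leftShift g))
    (μ : Measure ((G → Fin 3) × (G → Fin 3) × (G → Fin 3)))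
    (hμ : μ = ν.prod (ν.prod ν))
    (T₁ T₂ : G → ((G → Fin 3) × (G → Fin 3) × (G → Fin 3)) →
      ((G → Fin 3) × (G → Fin 3) × (G → Fin 3)))
    (hT₁ : ∀ g p, T₁ g p = (rightShift g p.1, p.2.1, rightShift g p.2.2))
    (hT₂ : ∀ g p, T₂ g p = (leftShift g p.1, rightShift g p.2.1, p.2.2))
    (A : Set ((G → Fin 3) × (G → Fin 3) × (G → Fin 3)))
    (hA : A = {p | p.1 1 ≠ p.2.1 1 ∧ p.2.1 1 ≠ p.2.2 1 ∧ p.1 1 ≠ p.2.2 1}) :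
    μ A = 6 / 27 ∧
    ∀ g : G, g ≠ 1 →
      μ (A ∩ (T₁ g '' A) ∩ ((fun p => T₁ g (T₂ g p)) '' A)) = 6 / 729 :=
  bernoulli_small_correlation_general ν hcyl μ hμ T₁ T₂ hT₁ hT₂ A hA
end

section
/- Let X be a compact metric space with a continuous action T of a countable amenable group G, and let x₀ ∈ X have dense orbit: closure of {T^g x₀ : g ∈ G} equals X. Then x₀ is quasi-generic for every ergodic T-invariant Borel probability measure μ on X: there exists a left Følner sequence (F_N) such that for every f ∈ C(X), (1/|F_N|) Σ_{g ∈ F_N} f(T^g x₀) → ∫ f dμ. -/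
open MeasureTheory Filter Topology
open scoped symmDiff

open Finset

/-!
`G` acts on `L²(μ)` by the isometries `v ↦ v ∘ T g`, so averages over a Følner sequence converge
to the projection onto the invariant vectors (mean ergodic theorem: the coboundaries `v - v ∘ T g`
are averaged away, and their span is dense in the orthogonal complement of the invariant vectors). By ergodicity the invariant vectors are the constants, so the orbital averages of every
continuous `f` converge to `∫ f dμ` in `L²`. Fix a dense sequence `u₀, u₁, …` in `C(X)`. For each `j`
some `F_{N_j}` makes the `L²` error of `u₀, …, u_j` tiny, so some point `y` has all these averages
within `1/(j+1)` of the integrals; this is an open condition on `y`, so by density it holds at an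
orbit point `T g_j x₀`. Averaging over `F_{N_j} g_j` at `x₀` is averaging over `F_{N_j}` at
`T g_j x₀`, and right translates of Følner sets are still Følner, so the sets `F_{N_j} g_j` work for
every `u_k`, hence (all averages being `1`-Lipschitz in the sup norm) for every `f`.
-/

theorem isClosed_setOf_tendsto_of_lipschitzWith {ι α β : Type*} [PseudoMetricSpace α]
    [PseudoMetricSpace β] {l : Filter ι} {K : NNReal} {F : ι → α → β} {f : α → β}
    (hF : ∀ i, LipschitzWith K (F i)) (hf : Continuous f) :
    IsClosed {x | Tendsto (F · x) l (𝓝 (f x))} := by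
  refine (Metric.equicontinuous_of_continuity_modulus (K * ·) ?_ F
    fun x y i => (hF i).dist_le_mul x y).isClosed_setOfPred_tendsto hf
  simpa using (continuous_const_mul (K : ℝ)).tendsto 0

theorem tendsto_of_denseRange_of_lipschitzWith {ι κ α β : Type*} [PseudoMetricSpace α]
    [PseudoMetricSpace β] {l : Filter ι} {K : NNReal} {F : ι → α → β} {f : α → β}
    (hF : ∀ i, LipschitzWith K (F i)) (hf : Continuous f) {u : κ → α} (hu : DenseRange u)
    (h : ∀ k, Tendsto (F · (u k)) l (𝓝 (f (u k)))) (x : α) :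
    Tendsto (F · x) l (𝓝 (f x)) :=
  (isClosed_setOf_tendsto_of_lipschitzWith hF hf).closure_subset_iff.2
    (Set.range_subset_iff.2 h) (hu x)

theorem norm_sum_sub_sum_le_card_symmDiff_mul {ι E : Type*} [DecidableEq ι]
    [SeminormedAddCommGroup E] {φ : ι → E} {C : ℝ} (hφ : ∀ i, ‖φ i‖ ≤ C) (s t : Finset ι) :
    ‖∑ i ∈ s, φ i - ∑ i ∈ t, φ i‖ ≤ #(s ∆ t) * C := by
  have hsum : ∀ u : Finset ι, ‖∑ i ∈ u, φ i‖ ≤ #u * C := fun u =>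
    (norm_sum_le _ _).trans <| by simpa using Finset.sum_le_sum fun i (_ : i ∈ u) => hφ i
  rw [← Finset.sum_sdiff_sub_sum_sdiff, symmDiff_def, Finset.sup_eq_union,
    Finset.card_union_of_disjoint disjoint_sdiff_sdiff, Nat.cast_add, add_mul]
  exact (norm_sub_le _ _).trans (add_le_add (hsum _) (hsum _))

section MeanErgodic

variable {G E : Type*} [NormedAddCommGroup E] [InnerProductSpace ℝ E]

noncomputable def ergodicAverage (U : G → E →ₗᵢ[ℝ] E) (F : Finset G) : E →L[ℝ] E :=
  (#F : ℝ)⁻¹ • ∑ g ∈ F, (U g).toContinuousLinearMap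

theorem ergodicAverage_apply (U : G → E →ₗᵢ[ℝ] E) (F : Finset G) (v : E) :
    ergodicAverage U F v = (#F : ℝ)⁻¹ • ∑ g ∈ F, U g v := by
  simp [ergodicAverage]

theorem lipschitzWith_ergodicAverage (U : G → E →ₗᵢ[ℝ] E) (F : Finset G) :
    LipschitzWith 1 (ergodicAverage U F) := by
  refine (ergodicAverage U F).lipschitz.weaken ?_
  rw [← NNReal.coe_le_coe, coe_nnnorm, NNReal.coe_one]
  refine ContinuousLinearMap.opNorm_le_bound _ zero_le_one fun v => ?_
  rw [ergodicAverage_apply, norm_smul, norm_inv, RCLike.norm_natCast, one_mul]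
  rcases F.eq_empty_or_nonempty with rfl | hF
  · simp
  refine inv_mul_le_of_le_mul₀ (by positivity) (by positivity) ?_
  simpa using norm_sum_le_of_le F fun g _ => ((U g).norm_map v).le

theorem ergodicAverage_apply_of_forall_eq {U : G → E →ₗᵢ[ℝ] E} {F : Finset G} (hF : F.Nonempty)
    {w : E} (hw : ∀ g, U g w = w) : ergodicAverage U F w = w := by
  rw [ergodicAverage_apply, Finset.sum_congr rfl fun g _ => hw g, Finset.sum_const,
    ← Nat.cast_smul_eq_nsmul ℝ, smul_smul, inv_mul_cancel₀ (by simpa using hF.ne_empty), one_smul]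

def coboundaries (U : G → E →ₗᵢ[ℝ] E) : Submodule ℝ E :=
  Submodule.span ℝ {w | ∃ v g, v - U g v = w}

theorem mem_orthogonal_coboundaries_iff {U : G → E →ₗᵢ[ℝ] E} {w : E} :
    w ∈ (coboundaries U)ᗮ ↔ ∀ g, U g w = w := by
  rw [← Submodule.span_singleton_le_iff_mem, ← Submodule.isOrtho_iff_le, coboundaries,
    Submodule.isOrtho_span]
  simp only [Set.mem_singleton_iff, forall_eq]
  constructor
  · intro h g
    have hw : inner ℝ w w = inner ℝ w (U g w) := by
      rw [← sub_eq_zero, ← inner_sub_right]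
      exact h ⟨w, g, rfl⟩
    refine eq_of_norm_le_re_inner_eq_norm_sq (𝕜 := ℝ) ((U g).norm_map w).le ?_
    rw [real_inner_comm, ← hw, RCLike.re_to_real, real_inner_self_eq_norm_sq]
  · rintro h _ ⟨v, g, rfl⟩
    rw [inner_sub_right, ← (U g).inner_map_map, h, sub_self]

variable [Group G] [DecidableEq G]

theorem norm_ergodicAverage_sub_apply_le {U : G → E →ₗᵢ[ℝ] E}
    (hU : ∀ g s v, U s (U g v) = U (g * s) v) (F : Finset G) (g : G) (v : E) :
    ‖ergodicAverage U F (v - U g v)‖ ≤ #(F.image (g * ·) ∆ F) / #F * ‖v‖ := by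
  have hshift : ∑ s ∈ F, U s (U g v) = ∑ s ∈ F.image (g * ·), U s v := by
    rw [Finset.sum_image fun a _ b _ h => mul_left_cancel h]
    exact Finset.sum_congr rfl fun s _ => hU g s v
  rw [map_sub, ergodicAverage_apply, ergodicAverage_apply, ← smul_sub,
    hshift, norm_smul, norm_inv, RCLike.norm_natCast, symmDiff_comm, div_eq_inv_mul, mul_assoc]
  gcongr
  exact norm_sum_sub_sum_le_card_symmDiff_mul (fun s => ((U s).norm_map v).le) _ _

theorem tendsto_ergodicAverage_zero_of_mem_closure {U : G → E →ₗᵢ[ℝ] E}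
    (hU : ∀ g s v, U s (U g v) = U (g * s) v) {F : ℕ → Finset G} (hF : IsFolner F) {v : E}
    (hv : v ∈ (coboundaries U).topologicalClosure) :
    Tendsto (fun N => ergodicAverage U (F N) v) atTop (𝓝 0) := by
  let S : Submodule ℝ E :=
    { carrier := {v | Tendsto (fun N => ergodicAverage U (F N) v) atTop (𝓝 0)}
      add_mem' := fun ha hb => by simpa using ha.add hb
      zero_mem' := by simp
      smul_mem' := fun c v hv => by simpa using hv.const_smul c }
  have hS : IsClosed (S : Set E) :=
    isClosed_setOf_tendsto_of_lipschitzWith (f := fun _ => (0 : E))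
      (fun N => lipschitzWith_ergodicAverage U (F N)) continuous_const
  refine Submodule.topologicalClosure_minimal _ (Submodule.span_le.2 ?_) hS hv
  rintro _ ⟨v, g, rfl⟩
  change Tendsto _ _ _
  rw [tendsto_zero_iff_norm_tendsto_zero]
  refine squeeze_zero (fun N => norm_nonneg _)
    (fun N => norm_ergodicAverage_sub_apply_le hU (F N) g v) ?_
  simpa using (hF.2 g).mul_const ‖v‖

theorem tendsto_ergodicAverage_starProjection [CompleteSpace E] {U : G → E →ₗᵢ[ℝ] E}
    (hU : ∀ g s v, U s (U g v) = U (g * s) v) {F : ℕ → Finset G} (hF : IsFolner F) (v : E) :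
    Tendsto (fun N => ergodicAverage U (F N) v) atTop
      (𝓝 ((coboundaries U)ᗮ.starProjection v)) := by
  set w := (coboundaries U)ᗮ.starProjection v
  have hw : ∀ N, ergodicAverage U (F N) w = w := fun N =>
    ergodicAverage_apply_of_forall_eq (hF.1 N)
      (mem_orthogonal_coboundaries_iff.1 (Submodule.starProjection_apply_mem _ v))
  have hvw : v - w ∈ (coboundaries U).topologicalClosure := by
    rw [← Submodule.orthogonal_orthogonal_eq_closure]
    exact Submodule.sub_starProjection_mem_orthogonal v
  simpa [hw] using (tendsto_ergodicAverage_zero_of_mem_closure hU hF hvw).add_const w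

end MeanErgodic

section Koopman

variable {G X : Type*} [MeasurableSpace X] {μ : Measure X} {T : G → X → X}

noncomputable def koopman (hinv : ∀ g, MeasurePreserving (T g) μ μ) (g : G) :
    Lp ℝ 2 μ →ₗᵢ[ℝ] Lp ℝ 2 μ :=
  Lp.compMeasurePreservingₗᵢ ℝ (T g) (hinv g)

theorem coeFn_koopman (hinv : ∀ g, MeasurePreserving (T g) μ μ) (g : G) (v : Lp ℝ 2 μ) :
    ⇑(koopman hinv g v) =ᵐ[μ] v ∘ T g :=
  Lp.coeFn_compMeasurePreserving v (hinv g)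

theorem koopman_const [IsFiniteMeasure μ] (hinv : ∀ g, MeasurePreserving (T g) μ μ) (g : G)
    (c : ℝ) : koopman hinv g (Lp.const 2 μ c) = Lp.const 2 μ c := by
  refine Lp.ext ?_
  filter_upwards [coeFn_koopman hinv g (Lp.const 2 μ c),
    (hinv g).quasiMeasurePreserving.ae_eq_comp (Lp.coeFn_const 2 μ c),
    Lp.coeFn_const 2 μ c] with x h₁ h₂ h₃
  simp_all

variable [Group G]

theorem koopman_koopman (hinv : ∀ g, MeasurePreserving (T g) μ μ)
    (hact : ∀ g g' x, T (g * g') x = T g (T g' x)) (g s : G) (v : Lp ℝ 2 μ) :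
    koopman hinv s (koopman hinv g v) = koopman hinv (g * s) v := by
  refine Lp.ext ?_
  filter_upwards [coeFn_koopman hinv s (koopman hinv g v),
    (hinv s).quasiMeasurePreserving.ae_eq_comp (coeFn_koopman hinv g v),
    coeFn_koopman hinv (g * s) v] with x h₁ h₂ h₃
  simp_all

variable [IsProbabilityMeasure μ] [Countable G]

theorem ae_mem_or_ae_notMem_of_ae_invariant (hinv : ∀ g, MeasurePreserving (T g) μ μ)
    (hact : ∀ g g' x, T (g * g') x = T g (T g' x))
    (herg : ∀ s : Set X, MeasurableSet s → (∀ g, T g ⁻¹' s = s) → μ s = 0 ∨ μ s = 1)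
    {s : Set X} (hs : NullMeasurableSet s μ) (hinvs : ∀ g, T g ⁻¹' s =ᵐ[μ] s) :
    (∀ᵐ x ∂μ, x ∈ s) ∨ ∀ᵐ x ∂μ, x ∉ s := by
  obtain ⟨t, ht, hst⟩ := hs
  -- The saturation of `t` is strictly invariant and a.e. equal to `s`.
  set w := ⋃ g, T g ⁻¹' t
  have hw : MeasurableSet w := .iUnion fun g => (hinv g).measurable ht
  have hw_inv : ∀ h, T h ⁻¹' w = w := fun h => by
    have hcomp : ∀ g, T g ∘ T h = T (g * h) := fun g => funext fun x => (hact g h x).symm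
    simp only [w, Set.preimage_iUnion, ← Set.preimage_comp, hcomp]
    exact (mul_right_surjective h).iUnion_comp (T · ⁻¹' t)
  have hws : w =ᵐ[μ] s := by
    have := Filter.EventuallyEq.countable_iUnion fun g =>
      ((hinv g).quasiMeasurePreserving.preimage_ae_eq hst.symm).trans (hinvs g)
    rwa [Set.iUnion_const] at this
  rw [← measure_eq_zero_iff_ae_notMem, ae_mem_iff_measure_eq (hs := ⟨t, ht, hst⟩),
    measure_univ, ← measure_congr hws]
  exact (herg w hw hw_inv).symm

theorem exists_ae_eq_const_of_ae_invariant (hinv : ∀ g, MeasurePreserving (T g) μ μ)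
    (hact : ∀ g g' x, T (g * g') x = T g (T g' x))
    (herg : ∀ s : Set X, MeasurableSet s → (∀ g, T g ⁻¹' s = s) → μ s = 0 ∨ μ s = 1)
    {u : X → ℝ} (hu : NullMeasurable u μ) (hinvu : ∀ g, u ∘ T g =ᵐ[μ] u) :
    ∃ c, u =ᵐ[μ] Function.const X c :=
  exists_eventuallyEq_const_of_forall_separating MeasurableSet fun U hU =>
    ae_mem_or_ae_notMem_of_ae_invariant hinv hact herg (hu hU) fun g =>
      ((hinvu g).mono fun _ hx => iff_of_eq (congrArg (· ∈ U) hx)).set_eq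

theorem mem_orthogonal_coboundaries_koopman_iff (hinv : ∀ g, MeasurePreserving (T g) μ μ)
    (hact : ∀ g g' x, T (g * g') x = T g (T g' x))
    (herg : ∀ s : Set X, MeasurableSet s → (∀ g, T g ⁻¹' s = s) → μ s = 0 ∨ μ s = 1)
    {w : Lp ℝ 2 μ} : w ∈ (coboundaries (koopman hinv))ᗮ ↔ ∃ c, w = Lp.const 2 μ c := by
  rw [mem_orthogonal_coboundaries_iff]
  constructor
  · intro hw
    obtain ⟨c, hc⟩ := exists_ae_eq_const_of_ae_invariant hinv hact herg
      (Lp.aestronglyMeasurable w).aemeasurable.nullMeasurable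
      fun g => (coeFn_koopman hinv g w).symm.trans (by rw [hw g])
    exact ⟨c, Lp.ext (hc.trans (Lp.coeFn_const 2 μ c).symm)⟩
  · rintro ⟨c, rfl⟩ g
    exact koopman_const hinv g c

theorem MeasureTheory.Lp.inner_const_right (v : Lp ℝ 2 μ) (c : ℝ) :
    inner ℝ v (Lp.const 2 μ c) = c * ∫ x, v x ∂μ := by
  have h1 : Lp.const 2 μ c = c • Lp.const 2 μ (1 : ℝ) := by
    simpa using (Lp.constₗ 2 μ ℝ).map_smul c (1 : ℝ)
  rw [h1, real_inner_smul_right, real_inner_comm, ← indicatorConstLp_univ,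
    L2.inner_indicatorConstLp_one, setIntegral_univ]

theorem starProjection_orthogonal_coboundaries_koopman
    (hinv : ∀ g, MeasurePreserving (T g) μ μ) (hact : ∀ g g' x, T (g * g') x = T g (T g' x))
    (herg : ∀ s : Set X, MeasurableSet s → (∀ g, T g ⁻¹' s = s) → μ s = 0 ∨ μ s = 1)
    (v : Lp ℝ 2 μ) :
    (coboundaries (koopman hinv))ᗮ.starProjection v = Lp.const 2 μ (∫ x, v x ∂μ) := by
  refine Submodule.eq_starProjection_of_mem_of_inner_eq_zero
    ((mem_orthogonal_coboundaries_koopman_iff hinv hact herg).2 ⟨_, rfl⟩) fun w hw => ?_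
  obtain ⟨c, rfl⟩ := (mem_orthogonal_coboundaries_koopman_iff hinv hact herg).1 hw
  have hconst : ∫ x, Lp.const 2 μ (∫ y, v y ∂μ) x ∂μ = ∫ y, v y ∂μ := by
    rw [integral_congr_ae (Lp.coeFn_const 2 μ _)]
    simp
  rw [inner_sub_left, Lp.inner_const_right, Lp.inner_const_right, hconst, sub_self]

theorem tendsto_ergodicAverage_koopman [DecidableEq G] (hinv : ∀ g, MeasurePreserving (T g) μ μ)
    (hact : ∀ g g' x, T (g * g') x = T g (T g' x))
    (herg : ∀ s : Set X, MeasurableSet s → (∀ g, T g ⁻¹' s = s) → μ s = 0 ∨ μ s = 1)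
    {F : ℕ → Finset G} (hF : IsFolner F) (v : Lp ℝ 2 μ) :
    Tendsto (fun N => ergodicAverage (koopman hinv) (F N) v) atTop
      (𝓝 (Lp.const 2 μ (∫ x, v x ∂μ))) := by
  rw [← starProjection_orthogonal_coboundaries_koopman hinv hact herg]
  exact tendsto_ergodicAverage_starProjection (koopman_koopman hinv hact) hF v

end Koopman

section OrbitAverage

variable {G X : Type*} {T : G → X → X}

noncomputable def orbitAverage (T : G → X → X) (F : Finset G) (f : X → ℝ) (x : X) : ℝ :=
  (∑ g ∈ F, f (T g x)) / #F

theorem orbitAverage_image_mul_right [Group G] [DecidableEq G]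
    (hact : ∀ g g' x, T (g * g') x = T g (T g' x)) (F : Finset G) (g : G) (f : X → ℝ) (x : X) :
    orbitAverage T (F.image (· * g)) f x = orbitAverage T F f (T g x) := by
  simp only [orbitAverage, Finset.sum_image fun a _ b _ h => mul_right_cancel h,
    Finset.card_image_of_injective _ (mul_left_injective g), hact]

theorem continuous_orbitAverage [TopologicalSpace X] (hcont : ∀ g, Continuous (T g))
    (F : Finset G) {f : X → ℝ} (hf : Continuous f) : Continuous (orbitAverage T F f) :=
  (continuous_finsetSum F fun g _ => hf.comp (hcont g)).div_const _

theorem lipschitzWith_orbitAverage [TopologicalSpace X] [CompactSpace X] (F : Finset G) (x : X) :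
    LipschitzWith 1 fun f : C(X, ℝ) => orbitAverage T F f x := by
  refine LipschitzWith.of_dist_le_mul fun f f' => ?_
  rcases F.eq_empty_or_nonempty with rfl | hF
  · simp [orbitAverage]
  rw [NNReal.coe_one, one_mul, Real.dist_eq, orbitAverage, orbitAverage, ← sub_div,
    ← Finset.sum_sub_distrib, abs_div, Nat.abs_cast, div_le_iff₀ (by positivity)]
  refine (Finset.abs_sum_le_sum_abs _ _).trans
    ((Finset.sum_le_sum fun g _ => ?_).trans_eq (by rw [Finset.sum_const, nsmul_eq_mul, mul_comm]))
  rw [← Real.dist_eq]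
  exact ContinuousMap.dist_apply_le_dist _

end OrbitAverage

theorem MeasureTheory.Lp.norm_sq_eq_integral_sq {α : Type*} [MeasurableSpace α] {μ : Measure α}
    {v : Lp ℝ 2 μ} {f : α → ℝ} (hv : v =ᵐ[μ] f) : ‖v‖ ^ 2 = ∫ x, f x ^ 2 ∂μ := by
  rw [← real_inner_self_eq_norm_sq, L2.inner_def]
  refine integral_congr_ae (hv.mono fun x hx => ?_)
  simp [hx, sq]

section KoopmanOrbit

variable {G X : Type*} [MeasurableSpace X] {μ : Measure X} {T : G → X → X}

theorem ergodicAverage_koopman_ae_eq (hinv : ∀ g, MeasurePreserving (T g) μ μ) (F : Finset G)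
    {v : Lp ℝ 2 μ} {f : X → ℝ} (hv : v =ᵐ[μ] f) :
    ergodicAverage (koopman hinv) F v =ᵐ[μ] orbitAverage T F f := by
  have hterm : ∀ᵐ x ∂μ, ∀ g ∈ F, koopman hinv g v x = f (T g x) :=
    eventually_all_finset F |>.2 fun g _ =>
      (coeFn_koopman hinv g v).trans ((hinv g).quasiMeasurePreserving.ae_eq_comp hv)
  rw [ergodicAverage_apply]
  filter_upwards [Lp.coeFn_smul (#F : ℝ)⁻¹ (∑ g ∈ F, koopman hinv g v),
    Lp.coeFn_fun_finsetSum F fun g => koopman hinv g v, hterm] with x hsmul hsum hterm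
  rw [hsmul, Pi.smul_apply, hsum, smul_eq_mul, orbitAverage, Finset.sum_congr rfl hterm,
    inv_mul_eq_div]

theorem tendsto_integral_sq_orbitAverage_sub [Group G] [Countable G] [DecidableEq G]
    [TopologicalSpace X] [BorelSpace X] [CompactSpace X] [IsProbabilityMeasure μ]
    (hinv : ∀ g, MeasurePreserving (T g) μ μ) (hact : ∀ g g' x, T (g * g') x = T g (T g' x))
    (herg : ∀ s : Set X, MeasurableSet s → (∀ g, T g ⁻¹' s = s) → μ s = 0 ∨ μ s = 1)
    {F : ℕ → Finset G} (hF : IsFolner F) (f : C(X, ℝ)) :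
    Tendsto (fun N => ∫ x, (orbitAverage T (F N) f x - ∫ y, f y ∂μ) ^ 2 ∂μ) atTop (𝓝 0) := by
  have hv : ContinuousMap.toLp 2 μ ℝ f =ᵐ[μ] f := ContinuousMap.coeFn_toLp μ f
  have hL2 := tendsto_iff_norm_sub_tendsto_zero.1
    (tendsto_ergodicAverage_koopman hinv hact herg hF (ContinuousMap.toLp 2 μ ℝ f))
  have hsq := hL2.pow 2
  rw [integral_congr_ae hv, zero_pow two_ne_zero] at hsq
  refine hsq.congr fun N => ?_
  refine Lp.norm_sq_eq_integral_sq ?_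
  filter_upwards [Lp.coeFn_sub (ergodicAverage (koopman hinv) (F N) (ContinuousMap.toLp 2 μ ℝ f))
      (Lp.const 2 μ (∫ y, f y ∂μ)), ergodicAverage_koopman_ae_eq hinv (F N) hv,
    Lp.coeFn_const 2 μ (∫ y, f y ∂μ)] with x hsub havg hconst
  rw [hsub, Pi.sub_apply, havg, hconst, Function.const_apply]

end KoopmanOrbit

theorem lipschitzWith_integral {X : Type*} [TopologicalSpace X] [CompactSpace X]
    [MeasurableSpace X] [OpensMeasurableSpace X] (μ : Measure X) [IsProbabilityMeasure μ] :
    LipschitzWith 1 fun f : C(X, ℝ) => ∫ x, f x ∂μ := by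
  refine LipschitzWith.of_dist_le_mul fun f f' => ?_
  have hint : ∀ f : C(X, ℝ), Integrable f μ := fun f =>
    f.continuous.integrable_of_hasCompactSupport (HasCompactSupport.of_compactSpace _)
  rw [NNReal.coe_one, one_mul, Real.dist_eq, ← integral_sub (hint f) (hint f')]
  have hpt : ∀ x, ‖f x - f' x‖ ≤ dist f f' := fun x => by
    rw [← dist_eq_norm]
    exact ContinuousMap.dist_apply_le_dist x
  simpa using norm_integral_le_of_norm_le_const (μ := μ) (Eventually.of_forall hpt)

theorem Dense.exists_mem_lt_of_integral_lt {X : Type*} [TopologicalSpace X] [MeasurableSpace X]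
    {μ : Measure X} [IsProbabilityMeasure μ] {D : Set X} (hD : Dense D) {φ : X → ℝ}
    (hφ : Continuous φ) (hint : Integrable φ μ) {a : ℝ} (ha : ∫ x, φ x ∂μ < a) :
    ∃ x ∈ D, φ x < a := by
  obtain ⟨y, hy⟩ := exists_le_integral hint
  exact hD.exists_mem_open (isOpen_lt hφ continuous_const) ⟨y, hy.trans_lt ha⟩

theorem IsFolner.image_mul_right {G : Type*} [Group G] [DecidableEq G] {F : ℕ → Finset G}
    (hF : IsFolner F) {N : ℕ → ℕ} (hN : Tendsto N atTop atTop) (g : ℕ → G) :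
    IsFolner fun j => (F (N j)).image (· * g j) := by
  refine ⟨fun j => (hF.1 (N j)).image _, fun h => ((hF.2 h).comp hN).congr fun j => ?_⟩
  have hcomm : ((F (N j)).image (· * g j)).image (h * ·) =
      ((F (N j)).image (h * ·)).image (· * g j) := by
    simp only [Finset.image_image, Function.comp_def, mul_assoc]
  simp only [Function.comp_apply, hcomm, ← Finset.image_symmDiff _ _ (mul_left_injective (g j)),
    Finset.card_image_of_injective _ (mul_left_injective (g j))]

section OrbitSelection

variable {G X : Type*} [TopologicalSpace X] [CompactSpace X] [MeasurableSpace X]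
  [OpensMeasurableSpace X] {μ : Measure X} [IsProbabilityMeasure μ] {T : G → X → X}

theorem exists_orbitAverage_near {ι : Type*} (hcont : ∀ g, Continuous (T g)) {x₀ : X}
    (hdense : Dense {x | ∃ g : G, T g x₀ = x}) {F : ℕ → Finset G} {u : ι → C(X, ℝ)}
    {c : ι → ℝ} (s : Finset ι)
    (hL2 : ∀ k ∈ s, Tendsto (fun N => ∫ x, (orbitAverage T (F N) (u k) x - c k) ^ 2 ∂μ)
      atTop (𝓝 0))
    {ε : ℝ} (hε : 0 < ε) (M : ℕ) :
    ∃ N ≥ M, ∃ g, ∀ k ∈ s, |orbitAverage T (F N) (u k) (T g x₀) - c k| < ε := by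
  have hsum := tendsto_finsetSum s hL2
  rw [Finset.sum_const_zero] at hsum
  obtain ⟨N, hNM, hN⟩ :=
    ((eventually_ge_atTop M).and (hsum.eventually (gt_mem_nhds (pow_pos hε 2)))).exists
  set φ := fun x => ∑ k ∈ s, (orbitAverage T (F N) (u k) x - c k) ^ 2
  have hφ : Continuous φ := continuous_finsetSum s fun k _ =>
    ((continuous_orbitAverage hcont _ (u k).continuous).sub continuous_const).pow 2
  have hint : ∀ k, Integrable (fun x => (orbitAverage T (F N) (u k) x - c k) ^ 2) μ := fun k =>
    (((continuous_orbitAverage hcont _ (u k).continuous).sub continuous_const).pow 2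
      ).integrable_of_hasCompactSupport (HasCompactSupport.of_compactSpace _)
  obtain ⟨_, ⟨g, rfl⟩, hg⟩ := hdense.exists_mem_lt_of_integral_lt hφ
    (integrable_finsetSum s fun k _ => hint k)
    ((integral_finsetSum s fun k _ => hint k).trans_lt hN)
  refine ⟨N, hNM, g, fun k hk => abs_lt_of_sq_lt_sq ?_ hε.le⟩
  exact (Finset.single_le_sum (f := fun k => (orbitAverage T (F N) (u k) (T g x₀) - c k) ^ 2)
    (fun k _ => sq_nonneg _) hk).trans_lt hg

end OrbitSelection

theorem dense_orbit_quasi_generic_general {G : Type*} [Group G] [Countable G] [DecidableEq G]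
    (hamen : ∃ F : ℕ → Finset G, IsFolner F)
    {X : Type*} [MetricSpace X] [CompactSpace X] [MeasurableSpace X] [BorelSpace X]
    (T : G → X → X) (hcont : ∀ g, Continuous (T g))
    (hact : ∀ g g' x, T (g * g') x = T g (T g' x))
    (x₀ : X) (hdense : Dense {x | ∃ g : G, T g x₀ = x})
    (μ : Measure X) [IsProbabilityMeasure μ]
    (hinv : ∀ g, MeasurePreserving (T g) μ μ)
    (herg : ∀ s : Set X, MeasurableSet s → (∀ g, T g ⁻¹' s = s) → μ s = 0 ∨ μ s = 1) :
    ∃ F : ℕ → Finset G, IsFolner F ∧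
      ∀ f : C(X, ℝ), Tendsto (fun N => (∑ g ∈ F N, f (T g x₀)) / ((F N).card : ℝ))
        atTop (𝓝 (∫ x, f x ∂μ)) := by
  obtain ⟨F, hF⟩ := hamen
  set u := TopologicalSpace.denseSeq C(X, ℝ)
  choose N hN g hg using fun j : ℕ => exists_orbitAverage_near hcont hdense (Finset.range (j + 1))
    (fun k _ => tendsto_integral_sq_orbitAverage_sub hinv hact herg hF (u k))
    (Nat.one_div_pos_of_nat (n := j)) j
  refine ⟨fun j => (F (N j)).image (· * g j),
    hF.image_mul_right (tendsto_atTop_mono hN tendsto_id) g, fun f => ?_⟩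
  refine tendsto_of_denseRange_of_lipschitzWith (fun j => lipschitzWith_orbitAverage _ x₀)
    (lipschitzWith_integral μ).continuous (TopologicalSpace.denseRange_denseSeq _) (fun k => ?_) f
  simp only [orbitAverage_image_mul_right hact]
  refine tendsto_iff_dist_tendsto_zero.2 (squeeze_zero' (Eventually.of_forall fun _ => dist_nonneg)
    ((eventually_ge_atTop k).mono fun j hj => ?_) tendsto_one_div_add_atTop_nhds_zero_nat)
  exact (hg j k (Finset.mem_range_succ_iff.2 hj)).le

/-- A point with dense orbit in a compact metric `G`-system is quasi-generic for every
ergodic invariant Borel probability measure: there is a left Følner sequence along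
which the orbital averages at the point converge to the integral, for every continuous
function. -/
theorem dense_orbit_quasi_generic {G : Type*} [Group G] [Countable G] [DecidableEq G]
    (hamen : ∃ F : ℕ → Finset G, IsFolner F)
    {X : Type*} [MetricSpace X] [CompactSpace X] [MeasurableSpace X] [BorelSpace X]
    (T : G → X → X) (hcont : ∀ g, Continuous (T g))
    (hact : ∀ g g' x, T (g * g') x = T g (T g' x)) (hid : ∀ x, T 1 x = x)
    (x₀ : X) (hdense : Dense {x | ∃ g : G, T g x₀ = x})
    (μ : Measure X) [IsProbabilityMeasure μ]
    (hinv : ∀ g, MeasurePreserving (T g) μ μ)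
    (herg : ∀ s : Set X, MeasurableSet s → (∀ g, T g ⁻¹' s = s) → μ s = 0 ∨ μ s = 1) :
    ∃ F : ℕ → Finset G, IsFolner F ∧
      ∀ f : C(X, ℝ), Tendsto (fun N => (∑ g ∈ F N, f (T g x₀)) / ((F N).card : ℝ))
        atTop (𝓝 (∫ x, f x ∂μ)) :=
  dense_orbit_quasi_generic_general hamen T hcont hact x₀ hdense μ hinv herg
end
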